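/- arXiv:2104.08210 — 4 statements merged into one kernel-verified Lean document; each statement's English description precedes it below -/
import Mathlib

section
/- Let (S, d) be a directed metric space of positive sign, let x, y ∈ S with d(x,y) < ∞, and let A be a geodesic set from x to y. Then A is contained in a geodesic from x to y; in particular, since {x, y} is a geodesic set, there exists a geodesic between any pair of points at finite distance. -/
/-- `le` is a compatible total order on the geodesic set `A` from `x` to `y`
for the directed metric `d`. -/
def CompatibleOrder {S : Type*} (d : S → S → EReal) (x y : S) (A : Set S)
    (le : S → S → Prop) : Prop :=
  (∀ a ∈ A, le a a) ∧
  (∀ a ∈ A, ∀ b ∈ A, le a b → le b a → a = b) ∧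
  (∀ a ∈ A, ∀ b ∈ A, ∀ c ∈ A, le a b → le b c → le a c) ∧
  (∀ a ∈ A, ∀ b ∈ A, le a b ∨ le b a) ∧
  (∀ z ∈ A, le x z ∧ le z y) ∧
  (∀ a ∈ A, ∀ b ∈ A, ∀ c ∈ A, le a b → le b c → d a c = d a b + d b c)

/-- `A` is a geodesic set from `x` to `y` for the directed metric `d`. -/
def IsGeodesicSet {S : Type*} (d : S → S → EReal) (x y : S) (A : Set S) : Prop :=
  x ∈ A ∧ y ∈ A ∧ ∃ le : S → S → Prop, CompatibleOrder d x y A le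

/-- `A` is a geodesic from `x` to `y`: a maximal geodesic set under inclusion. -/
def IsGeodesic {S : Type*} (d : S → S → EReal) (x y : S) (A : Set S) : Prop :=
  IsGeodesicSet d x y A ∧
    ∀ B : Set S, IsGeodesicSet d x y B → A ⊆ B → B = A

private lemma er_ne_top_left {a b : EReal} (h : a + b ≠ ⊤) (hb : b ≠ ⊥) : a ≠ ⊤ := by
  intro ha; rw [ha, EReal.top_add_of_ne_bot hb] at h; exact h rfl

private lemma er_ne_top_right {a b : EReal} (h : a + b ≠ ⊤) (ha : a ≠ ⊥) : b ≠ ⊤ := by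
  intro hb; rw [hb, EReal.add_top_of_ne_bot ha] at h; exact h rfl

private lemma er_cancel_le {a b c : EReal} (ha : a ≠ ⊥) (ha' : a ≠ ⊤) (h : a + b ≤ a + c) :
    b ≤ c := by
  lift a to ℝ using ⟨ha', ha⟩
  exact EReal.addLECancellable_coe a h

private lemma exists_geodesic_ext {S : Type*} (d : S → S → EReal)
    (hbot : ∀ x y, d x y ≠ ⊥)
    (hzero : ∀ x, d x x = 0)
    (htri : ∀ x y z, d x z ≤ d x y + d y z)
    (x y : S) (hfin : d x y ≠ ⊤)
    (A : Set S) (hA : IsGeodesicSet d x y A) :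
    ∃ G : Set S, A ⊆ G ∧ IsGeodesic d x y G := by
  classical
  obtain ⟨hxA, hyA, le0, h01, h02, h03, h04, h05, h06⟩ := hA
  -- the poset of pairs (geodesic set, compatible order supported on it) extending A
  let Pred : Set S × (S → S → Prop) → Prop := fun p =>
    A ⊆ p.1 ∧ x ∈ p.1 ∧ y ∈ p.1 ∧ CompatibleOrder d x y p.1 p.2 ∧
      ∀ a b, p.2 a b → a ∈ p.1 ∧ b ∈ p.1
  let P := {p : Set S × (S → S → Prop) // Pred p}
  let r : P → P → Prop := fun p q =>
    p.1.1 ⊆ q.1.1 ∧ ∀ a ∈ p.1.1, ∀ b ∈ p.1.1, (p.1.2 a b ↔ q.1.2 a b)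
  have rrefl : ∀ p : P, r p p := fun p => ⟨subset_rfl, fun _ _ _ _ => Iff.rfl⟩
  have rtrans : ∀ {p q s : P}, r p q → r q s → r p s := by
    intro p q s h1 h2
    exact ⟨h1.1.trans h2.1, fun a ha b hb => (h1.2 a ha b hb).trans (h2.2 a (h1.1 ha) b (h1.1 hb))⟩
  -- base element
  have p0pred : Pred (A, fun a b => a ∈ A ∧ b ∈ A ∧ le0 a b) := by
    refine ⟨subset_rfl, hxA, hyA, ?_, fun a b h => ⟨h.1, h.2.1⟩⟩
    refine ⟨fun a ha => ⟨ha, ha, h01 a ha⟩,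
      fun a ha b hb hab hba => h02 a ha b hb hab.2.2 hba.2.2,
      fun a ha b hb c hc hab hbc => ⟨ha, hc, h03 a ha b hb c hc hab.2.2 hbc.2.2⟩,
      fun a ha b hb => (h04 a ha b hb).imp (fun h => ⟨ha, hb, h⟩) (fun h => ⟨hb, ha, h⟩),
      fun w hw => ⟨⟨hxA, hw, (h05 w hw).1⟩, ⟨hw, hyA, (h05 w hw).2⟩⟩,
      fun a ha b hb c hc hab hbc => h06 a ha b hb c hc hab.2.2 hbc.2.2⟩
  let p0 : P := ⟨(A, fun a b => a ∈ A ∧ b ∈ A ∧ le0 a b), p0pred⟩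
  -- chains are bounded
  have hchains : ∀ c : Set P, IsChain r c → ∃ ub, ∀ p ∈ c, r p ub := by
    intro c hc
    rcases c.eq_empty_or_nonempty with rfl | ⟨p1, hp1⟩
    · exact ⟨p0, fun p hp => hp.elim⟩
    have hdir : ∀ p ∈ c, ∀ q ∈ c, r p q ∨ r q p := by
      intro p hp q hq
      rcases eq_or_ne p q with rfl | h
      · exact Or.inl (rrefl p)
      · exact hc hp hq h
    -- common upper bound inside the chain for two elements
    have hup : ∀ p ∈ c, ∀ q ∈ c, ∃ s ∈ c, r p s ∧ r q s := by
      intro p hp q hq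
      rcases hdir p hp q hq with h | h
      · exact ⟨q, hq, h, rrefl q⟩
      · exact ⟨p, hp, rrefl p, h⟩
    -- monotonicity of orders along r, using support
    have hmono : ∀ p : P, ∀ q : P, r p q → ∀ a b, p.1.2 a b → q.1.2 a b := by
      intro p q hr a b hab
      obtain ⟨ha, hb⟩ := p.2.2.2.2.2 a b hab
      exact (hr.2 a ha b hb).mp hab
    let U : Set S := {s | ∃ p ∈ c, s ∈ p.1.1}
    let leU : S → S → Prop := fun a b => ∃ p ∈ c, p.1.2 a b
    have hsubU : ∀ p ∈ c, p.1.1 ⊆ U := fun p hp s hs => ⟨p, hp, hs⟩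
    have hUpred : Pred (U, leU) := by
      refine ⟨p1.2.1.trans (hsubU p1 hp1), hsubU p1 hp1 p1.2.2.1, hsubU p1 hp1 p1.2.2.2.1,
        ?_, ?_⟩
      · constructor
        · rintro a ⟨p, hp, ha⟩
          exact ⟨p, hp, p.2.2.2.2.1.1 a ha⟩
        constructor
        · rintro a _ b _ ⟨p, hp, hab⟩ ⟨q, hq, hba⟩
          obtain ⟨s, hs, hps, hqs⟩ := hup p hp q hq
          have hab' := hmono p s hps a b hab
          have hba' := hmono q s hqs b a hba
          obtain ⟨ha, hb⟩ := s.2.2.2.2.2 a b hab'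
          exact s.2.2.2.2.1.2.1 a ha b hb hab' hba'
        constructor
        · rintro a _ b _ c' _ ⟨p, hp, hab⟩ ⟨q, hq, hbc⟩
          obtain ⟨s, hs, hps, hqs⟩ := hup p hp q hq
          have hab' := hmono p s hps a b hab
          have hbc' := hmono q s hqs b c' hbc
          obtain ⟨ha, hb⟩ := s.2.2.2.2.2 a b hab'
          obtain ⟨-, hc'⟩ := s.2.2.2.2.2 b c' hbc'
          exact ⟨s, hs, s.2.2.2.2.1.2.2.1 a ha b hb c' hc' hab' hbc'⟩
        constructor
        · rintro a ⟨p, hp, ha⟩ b ⟨q, hq, hb⟩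
          obtain ⟨s, hs, hps, hqs⟩ := hup p hp q hq
          have ha' := hps.1 ha
          have hb' := hqs.1 hb
          exact (s.2.2.2.2.1.2.2.2.1 a ha' b hb').imp (fun h => ⟨s, hs, h⟩) (fun h => ⟨s, hs, h⟩)
        constructor
        · rintro w ⟨p, hp, hw⟩
          exact ⟨⟨p, hp, (p.2.2.2.2.1.2.2.2.2.1 w hw).1⟩, ⟨p, hp, (p.2.2.2.2.1.2.2.2.2.1 w hw).2⟩⟩
        · rintro a _ b _ c' _ ⟨p, hp, hab⟩ ⟨q, hq, hbc⟩
          obtain ⟨s, hs, hps, hqs⟩ := hup p hp q hq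
          have hab' := hmono p s hps a b hab
          have hbc' := hmono q s hqs b c' hbc
          obtain ⟨ha, hb⟩ := s.2.2.2.2.2 a b hab'
          obtain ⟨-, hc'⟩ := s.2.2.2.2.2 b c' hbc'
          exact s.2.2.2.2.1.2.2.2.2.2 a ha b hb c' hc' hab' hbc'
      · rintro a b ⟨p, hp, hab⟩
        obtain ⟨ha, hb⟩ := p.2.2.2.2.2 a b hab
        exact ⟨hsubU p hp ha, hsubU p hp hb⟩
    refine ⟨⟨(U, leU), hUpred⟩, fun p hp => ⟨hsubU p hp, fun a ha b hb => ?_⟩⟩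
    constructor
    · exact fun h => ⟨p, hp, h⟩
    · rintro ⟨q, hq, hab⟩
      rcases hdir p hp q hq with h | h
      · exact (h.2 a ha b hb).mpr hab
      · obtain ⟨ha', hb'⟩ := q.2.2.2.2.2 a b hab
        exact (h.2 a ha' b hb').mp hab
  obtain ⟨m, hm⟩ := exists_maximal_of_chains_bounded hchains (fun {a b c} => rtrans)
  obtain ⟨hAG, hxG, hyG, hcG, hsupp⟩ := m.2
  set G := m.1.1 with hGdef
  set leG := m.1.2 with hleGdef
  obtain ⟨G1, G2, G3, G4, G5, G6⟩ := hcG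
  refine ⟨G, hAG, ⟨hxG, hyG, leG, G1, G2, G3, G4, G5, G6⟩, ?_⟩
  -- maximality as a set
  intro B hB hGB
  by_contra hBG
  obtain ⟨z, hzB, hzG⟩ := Set.exists_of_ssubset (hGB.ssubset_of_ne (Ne.symm hBG))
  obtain ⟨hxB, hyB, leB, B1, B2, B3, B4, B5, B6⟩ := hB
  have hne : ∀ a ∈ G, a ≠ z := fun a ha h => hzG (h ▸ ha)
  have hxy : x ≠ y := by
    intro h
    have h1 := (B5 z hzB).1
    have h2 := (B5 z hzB).2
    rw [← h] at h2
    exact hzG ((B2 x hxB z hzB h1 h2) ▸ hxG)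
  -- finiteness facts
  have hfinB : ∀ a ∈ B, ∀ b ∈ B, leB a b → d a b ≠ ⊤ := by
    intro a ha b hb hab
    have h1 : d x y = d x a + d a y := B6 x hxB a ha y hyB (B5 a ha).1 (B5 a ha).2
    have h2 : d a y = d a b + d b y := B6 a ha b hb y hyB hab (B5 b hb).2
    have key : d x a + (d a b + d b y) ≠ ⊤ := by rw [← h2, ← h1]; exact hfin
    exact er_ne_top_left (er_ne_top_right key (hbot x a)) (hbot b y)
  have hdxz_fin : d x z ≠ ⊤ := hfinB x hxB z hzB (B5 z hzB).1
  have hdxg_fin : ∀ g ∈ G, d x g ≠ ⊤ := by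
    intro g hg
    exact hfinB x hxB g (hGB hg) (B5 g (hGB hg)).1
  -- `D g` means g lies (weakly) below z
  have hzy : d x y = d x z + d z y := B6 x hxB z hzB y hyB (B5 z hzB).1 (B5 z hzB).2
  have hD_of_leB : ∀ g ∈ G, leB g z → d x g + d g z = d x z := fun g hg h =>
    (B6 x hxB g (hGB hg) z hzB (B5 g (hGB hg)).1 h).symm
  have hUp_of_leB : ∀ g ∈ G, leB z g → d x g = d x z + d z g := fun g hg h =>
    B6 x hxB z hzB g (hGB hg) (B5 z hzB).1 h
  have hUp : ∀ g ∈ G, (g = y ∨ ¬ d x g + d g z = d x z) → d x g = d x z + d z g := by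
    intro g hg h
    rcases h with rfl | hnd
    · exact hzy
    · rcases B4 g (hGB hg) z hzB with h | h
      · exact absurd (hD_of_leB g hg h) hnd
      · exact hUp_of_leB g hg h
  -- key computation lemmas
  have L1 : ∀ g1 ∈ G, ∀ g2 ∈ G, leG g1 g2 → d x g2 + d g2 z = d x z →
      (d x g1 + d g1 z = d x z) ∧ d g1 z = d g1 g2 + d g2 z := by
    intro g1 hg1 g2 hg2 h hD2
    have h12 : d x g2 = d x g1 + d g1 g2 := G6 x hxG g1 hg1 g2 hg2 (G5 g1 hg1).1 h
    have e1 : d x g1 + (d g1 g2 + d g2 z) = d x z := by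
      rw [← add_assoc, ← h12]; exact hD2
    have le2 : d g1 g2 + d g2 z ≤ d g1 z := by
      refine er_cancel_le (hbot x g1) (hdxg_fin g1 hg1) ?_
      rw [e1]; exact htri x g1 z
    have heq : d g1 z = d g1 g2 + d g2 z := le_antisymm (htri g1 g2 z) le2
    exact ⟨by rw [heq]; exact e1, heq⟩
  have L2 : ∀ g1 ∈ G, d x g1 + d g1 z = d x z → ∀ g2 ∈ G,
      (g2 = y ∨ ¬ d x g2 + d g2 z = d x z) → d g1 g2 = d g1 z + d z g2 := by
    intro g1 hg1 hD1 g2 hg2 h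
    have hu : d x g2 = d x z + d z g2 := hUp g2 hg2 h
    have e : d x g1 + (d g1 z + d z g2) = d x g2 := by
      rw [← add_assoc, hD1, ← hu]
    have le2 : d g1 z + d z g2 ≤ d g1 g2 := by
      refine er_cancel_le (hbot x g1) (hdxg_fin g1 hg1) ?_
      rw [e]; exact htri x g1 g2
    exact le_antisymm (htri g1 z g2) le2
  have L3 : ∀ g1 ∈ G, (g1 = y ∨ ¬ d x g1 + d g1 z = d x z) → ∀ g2 ∈ G, leG g1 g2 →
      d z g2 = d z g1 + d g1 g2 ∧ (g2 = y ∨ ¬ d x g2 + d g2 z = d x z) := by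
    intro g1 hg1 h1 g2 hg2 h
    have hu1 : d x g1 = d x z + d z g1 := hUp g1 hg1 h1
    have h12 : d x g2 = d x g1 + d g1 g2 := G6 x hxG g1 hg1 g2 hg2 (G5 g1 hg1).1 h
    have e : d x z + (d z g1 + d g1 g2) = d x g2 := by
      rw [← add_assoc, ← hu1, ← h12]
    have le2 : d z g1 + d g1 g2 ≤ d z g2 := by
      refine er_cancel_le (hbot x z) hdxz_fin ?_
      rw [e]; exact htri x z g2
    refine ⟨le_antisymm (htri z g1 g2) le2, ?_⟩
    by_contra hcon
    push_neg at hcon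
    obtain ⟨hg2y, hD2⟩ := hcon
    rcases h1 with rfl | hnd1
    · exact hg2y (G2 g2 hg2 g1 hg1 (G5 g2 hg2).2 h)
    · exact hnd1 (L1 g1 hg1 g2 hg2 h hD2).1
  -- the extended order on insert z G
  let le' : S → S → Prop := fun a b =>
    (a ∈ G ∧ b ∈ G ∧ leG a b) ∨
    (a = z ∧ b = z) ∨
    (a ∈ G ∧ b = z ∧ a ≠ y ∧ d x a + d a z = d x z) ∨
    (a = z ∧ b ∈ G ∧ (b = y ∨ ¬ d x b + d b z = d x z))
  have hmemG' : ∀ a ∈ insert z G, a = z ∨ a ∈ G := fun a ha => ha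
  have compat' : CompatibleOrder d x y (insert z G) le' := by
    constructor
    · -- reflexive
      intro a ha
      rcases hmemG' a ha with haz | haG
      · exact Or.inr (Or.inl ⟨haz, haz⟩)
      · exact Or.inl ⟨haG, haG, G1 a haG⟩
    constructor
    · -- antisymmetric
      intro a _ b _ hab hba
      rcases hab with ⟨haG, hbG, h1⟩ | ⟨haz, hbz⟩ | ⟨haG, hbz, hay, hda⟩ | ⟨haz, hbG, hb'⟩
      · rcases hba with ⟨_, _, h2⟩ | ⟨hbz, _⟩ | ⟨_, haz, _, _⟩ | ⟨hbz, _, _⟩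
        · exact G2 a haG b hbG h1 h2
        · exact absurd hbz (hne b hbG)
        · exact absurd haz (hne a haG)
        · exact absurd hbz (hne b hbG)
      · exact haz.trans hbz.symm
      · rcases hba with ⟨hbG', _, _⟩ | ⟨hbz', haz⟩ | ⟨hbG', haz, _, _⟩ | ⟨hbz', haG', h'⟩
        · exact absurd hbz (hne b hbG')
        · exact haz.trans hbz'.symm
        · exact absurd haz (hne a haG)
        · rcases h' with hay' | h'
          · exact absurd hay' hay
          · exact absurd hda h'
      · rcases hba with ⟨hbG', haG', _⟩ | ⟨hbz2, haz2⟩ | ⟨hbG', haz', hby, hdb⟩ | ⟨_, haG', _⟩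
        · exact absurd haz (hne a haG')
        · exact haz.trans hbz2.symm
        · rcases hb' with hby' | h'
          · exact absurd hby' hby
          · exact absurd hdb h'
        · exact absurd haz (hne a haG')
    constructor
    · -- transitive
      intro a _ b _ c _ hab hbc
      rcases hab with ⟨haG, hbG, h1⟩ | ⟨haz, hbz⟩ | ⟨haG, hbz, hay, hda⟩ | ⟨haz, hbG, hb'⟩
      · rcases hbc with ⟨_, hcG, h2⟩ | ⟨hbz, hcz⟩ | ⟨_, hcz, hby, hdb⟩ | ⟨hbz, _, _⟩
        · exact Or.inl ⟨haG, hcG, G3 a haG b hbG c hcG h1 h2⟩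
        · exact absurd hbz (hne b hbG)
        · refine Or.inr (Or.inr (Or.inl ⟨haG, hcz, ?_, (L1 a haG b hbG h1 hdb).1⟩))
          intro h
          exact hby (G2 b hbG y hyG (G5 b hbG).2 (h ▸ h1))
        · exact absurd hbz (hne b hbG)
      · rcases hbc with ⟨hbG, _, _⟩ | ⟨_, hcz⟩ | ⟨hbG, _, _, _⟩ | ⟨_, hcG, hc'⟩
        · exact absurd hbz (hne b hbG)
        · exact Or.inr (Or.inl ⟨haz, hcz⟩)
        · exact absurd hbz (hne b hbG)
        · exact Or.inr (Or.inr (Or.inr ⟨haz, hcG, hc'⟩))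
      · rcases hbc with ⟨hbG, _, _⟩ | ⟨_, hcz⟩ | ⟨hbG, _, _, _⟩ | ⟨_, hcG, hc'⟩
        · exact absurd hbz (hne b hbG)
        · exact Or.inr (Or.inr (Or.inl ⟨haG, hcz, hay, hda⟩))
        · exact absurd hbz (hne b hbG)
        · rcases hc' with hcy | hndc
          · exact Or.inl ⟨haG, hcG, hcy ▸ (G5 a haG).2⟩
          · rcases G4 a haG c hcG with h | h
            · exact Or.inl ⟨haG, hcG, h⟩
            · exact absurd (L1 c hcG a haG h hda).1 hndc
      · rcases hbc with ⟨_, hcG, h2⟩ | ⟨hbz, hcz⟩ | ⟨_, hcz, hby2, hdb⟩ | ⟨hbz, _, _⟩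
        · exact Or.inr (Or.inr (Or.inr ⟨haz, hcG, (L3 b hbG hb' c hcG h2).2⟩))
        · exact Or.inr (Or.inl ⟨haz, hcz⟩)
        · exact Or.inr (Or.inl ⟨haz, hcz⟩)
        · exact absurd hbz (hne b hbG)
    constructor
    · -- total
      intro a ha b hb
      rcases hmemG' a ha with haz | haG
      · rcases hmemG' b hb with hbz | hbG
        · exact Or.inl (Or.inr (Or.inl ⟨haz, hbz⟩))
        · by_cases hby : b = y
          · exact Or.inl (Or.inr (Or.inr (Or.inr ⟨haz, hbG, Or.inl hby⟩)))
          · by_cases hdb : d x b + d b z = d x z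
            · exact Or.inr (Or.inr (Or.inr (Or.inl ⟨hbG, haz, hby, hdb⟩)))
            · exact Or.inl (Or.inr (Or.inr (Or.inr ⟨haz, hbG, Or.inr hdb⟩)))
      · rcases hmemG' b hb with hbz | hbG
        · by_cases hay : a = y
          · exact Or.inr (Or.inr (Or.inr (Or.inr ⟨hbz, haG, Or.inl hay⟩)))
          · by_cases hda : d x a + d a z = d x z
            · exact Or.inl (Or.inr (Or.inr (Or.inl ⟨haG, hbz, hay, hda⟩)))
            · exact Or.inr (Or.inr (Or.inr (Or.inr ⟨hbz, haG, Or.inr hda⟩)))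
        · exact (G4 a haG b hbG).imp (fun h => Or.inl ⟨haG, hbG, h⟩)
            (fun h => Or.inl ⟨hbG, haG, h⟩)
    constructor
    · -- bounds
      intro w hw
      rcases hmemG' w hw with hwz | hwG
      · constructor
        · refine Or.inr (Or.inr (Or.inl ⟨hxG, hwz, hxy, ?_⟩))
          rw [hzero x, zero_add]
        · exact Or.inr (Or.inr (Or.inr ⟨hwz, hyG, Or.inl rfl⟩))
      · exact ⟨Or.inl ⟨hxG, hwG, (G5 w hwG).1⟩, Or.inl ⟨hwG, hyG, (G5 w hwG).2⟩⟩
    · -- metric compatibility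
      intro a _ b _ c _ hab hbc
      rcases hab with ⟨haG, hbG, h1⟩ | ⟨haz, hbz⟩ | ⟨haG, hbz, hay, hda⟩ | ⟨haz, hbG, hb'⟩
      · rcases hbc with ⟨_, hcG, h2⟩ | ⟨hbz, hcz⟩ | ⟨_, hcz, hby, hdb⟩ | ⟨hbz, _, _⟩
        · exact G6 a haG b hbG c hcG h1 h2
        · exact absurd hbz (hne b hbG)
        · rw [hcz]
          exact (L1 a haG b hbG h1 hdb).2
        · exact absurd hbz (hne b hbG)
      · rw [haz, hbz, hzero z, zero_add]
      · rcases hbc with ⟨hbG, _, _⟩ | ⟨_, hcz⟩ | ⟨hbG, _, _, _⟩ | ⟨_, hcG, hc'⟩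
        · exact absurd hbz (hne b hbG)
        · rw [hbz, hcz, hzero z, add_zero]
        · exact absurd hbz (hne b hbG)
        · rw [hbz]
          exact L2 a haG hda c hcG hc'
      · rcases hbc with ⟨_, hcG, h2⟩ | ⟨hbz, hcz⟩ | ⟨_, hcz, hby2, hdb⟩ | ⟨hbz, _, _⟩
        · rw [haz]
          exact (L3 b hbG hb' c hcG h2).1
        · exact absurd hbz (hne b hbG)
        · rcases hb' with hby' | h'
          · exact absurd hby' hby2
          · exact absurd hdb h'
        · exact absurd hbz (hne b hbG)
  have qpred : Pred (insert z G, le') := by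
    refine ⟨hAG.trans (Set.subset_insert z G), Set.mem_insert_of_mem z hxG,
      Set.mem_insert_of_mem z hyG, compat', ?_⟩
    rintro a b (⟨haG, hbG, _⟩ | ⟨haz, hbz⟩ | ⟨haG, hbz, _, _⟩ | ⟨haz, hbG, _⟩)
    · exact ⟨Set.mem_insert_of_mem z haG, Set.mem_insert_of_mem z hbG⟩
    · exact ⟨Set.mem_insert_iff.mpr (Or.inl haz), Set.mem_insert_iff.mpr (Or.inl hbz)⟩
    · exact ⟨Set.mem_insert_of_mem z haG, Set.mem_insert_iff.mpr (Or.inl hbz)⟩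
    · exact ⟨Set.mem_insert_iff.mpr (Or.inl haz), Set.mem_insert_of_mem z hbG⟩
  have hmq : r m ⟨(insert z G, le'), qpred⟩ := by
    refine ⟨Set.subset_insert z G, fun a ha b hb => ?_⟩
    constructor
    · exact fun h => Or.inl ⟨ha, hb, h⟩
    · rintro (⟨_, _, h⟩ | ⟨haz, _⟩ | ⟨_, hbz, _, _⟩ | ⟨haz, _, _⟩)
      · exact h
      · exact absurd haz (hne a ha)
      · exact absurd hbz (hne b hb)
      · exact absurd haz (hne a ha)
  exact hzG ((hm _ hmq).1 (Set.mem_insert z G))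

/-- In a directed metric space of positive sign, any geodesic set from `x` to `y`
(with `d(x,y) < ∞`) is contained in a geodesic from `x` to `y`; in particular,
there is a geodesic between every pair of points at finite distance. -/
theorem geodesicSet_subset_geodesic {S : Type*} (d : S → S → EReal)
    (hbot : ∀ x y, d x y ≠ ⊥)
    (hzero : ∀ x, d x x = 0)
    (htri : ∀ x y z, d x z ≤ d x y + d y z)
    (x y : S) (hfin : d x y ≠ ⊤)
    (A : Set S) (hA : IsGeodesicSet d x y A) :
    (∃ G : Set S, A ⊆ G ∧ IsGeodesic d x y G) ∧
    (∀ u v : S, d u v ≠ ⊤ → ∃ G : Set S, IsGeodesic d u v G) := by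
  classical
  refine ⟨exists_geodesic_ext d hbot hzero htri x y hfin A hA, ?_⟩
  intro u v huv
  have hpair : IsGeodesicSet d u v {u, v} := by
    refine ⟨Set.mem_insert u {v}, Set.mem_insert_of_mem u rfl,
      fun a b => (a = u ∨ a = v) ∧ (b = u ∨ b = v) ∧ (a = u ∨ b = v), ?_⟩
    have hmem : ∀ a ∈ ({u, v} : Set S), a = u ∨ a = v := by
      intro a ha
      simpa using ha
    constructor
    · intro a ha
      rcases hmem a ha with rfl | rfl
      · exact ⟨Or.inl rfl, Or.inl rfl, Or.inl rfl⟩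
      · exact ⟨Or.inr rfl, Or.inr rfl, Or.inr rfl⟩
    constructor
    · intro a ha b hb hab hba
      rcases hab.2.2 with h1 | h1
      · rcases hba.2.2 with h2 | h2
        · exact h1.trans h2.symm
        · rcases hab.2.1 with h3 | h3
          · exact h1.trans h3.symm
          · exact h1.trans ((h1.symm.trans h2).trans h3.symm)
      · rcases hba.2.2 with h2 | h2
        · rcases hab.1 with h3 | h3
          · exact h3.trans h2.symm
          · exact h3.trans h1.symm
        · exact h2.trans h1.symm
    constructor
    · intro a ha b hb c hc hab hbc
      refine ⟨hab.1, hbc.2.1, ?_⟩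
      rcases hab.2.2 with h1 | h1
      · exact Or.inl h1
      · rcases hbc.2.2 with h2 | h2
        · rcases hbc.2.1 with h3 | h3
          · exact Or.inr (h3.trans (h2.symm.trans h1))
          · exact Or.inr h3
        · exact Or.inr h2
    constructor
    · intro a ha b hb
      by_cases hau : a = u
      · exact Or.inl ⟨hmem a ha, hmem b hb, Or.inl hau⟩
      · rcases hmem a ha with rfl | rfl
        · exact absurd rfl hau
        · exact Or.inr ⟨hmem b hb, hmem a ha, Or.inr rfl⟩
    constructor
    · intro w hw
      exact ⟨⟨Or.inl rfl, hmem w hw, Or.inl rfl⟩, ⟨hmem w hw, Or.inr rfl, Or.inr rfl⟩⟩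
    · intro a ha b hb c hc hab hbc
      rcases eq_or_ne a b with rfl | hab'
      · rw [hzero a, zero_add]
      · rcases eq_or_ne b c with rfl | hbc'
        · rw [hzero b, add_zero]
        · exfalso
          rcases hab.1 with ha1 | ha1 <;> rcases hab.2.1 with hb1 | hb1
          · exact hab' (ha1.trans hb1.symm)
          · rcases hbc.2.2 with h | h
            · exact hab' (ha1.trans ((h.symm.trans hb1).trans hb1.symm))
            · exact hbc' (h.trans hb1.symm).symm
          · rcases hab.2.2 with h | h
            · exact hab' (h.trans hb1.symm)
            · exact hab' (ha1.trans h.symm)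
          · exact hab' (ha1.trans hb1.symm)
  obtain ⟨G, -, hG⟩ := exists_geodesic_ext d hbot hzero htri u v huv {u, v} hpair
  exact ⟨G, hG⟩
end

section
/- Quadrangle inequality for lattice last passage percolation: let G : ℤ² → [0,∞) be a nonnegative weight array. For integers x₁ ≤ x₂ ≤ y₁ ≤ y₂ and n ≥ m, one has G[(x₁,n) → (y₁,m)] + G[(x₂,n) → (y₂,m)] ≥ G[(x₁,n) → (y₂,m)] + G[(x₂,n) → (y₁,m)]. -/
/-!
A path from `(x₁, n)` to `(y₂, m)` and a path from `(x₂, n)` to `(y₁, m)` start in one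
left-to-right order and end in the opposite one, so, as both move only right and down,
they share a vertex. Exchanging their tails at that vertex produces a path from `(x₁, n)`
to `(y₁, m)` and one from `(x₂, n)` to `(y₂, m)` visiting the same vertices with the same
multiplicities, hence carrying the same total weight.
-/
/-- `π` is a lattice path from `p` to `q` in `ℤ²`: a nonempty finite sequence of
points starting at `p`, ending at `q`, in which each step increments the first
coordinate by `1` or decrements the second coordinate by `1`. -/
def IsLatPath (p q : ℤ × ℤ) (π : List (ℤ × ℤ)) : Prop :=
  π.head? = some p ∧ π.getLast? = some q ∧
  π.Chain' (fun u v => v = (u.1 + 1, u.2) ∨ v = (u.1, u.2 - 1))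

/-- The last passage value `G[p → q]`: the supremum (in `EReal`, so `−∞` if no
path exists) of the total weight collected along lattice paths from `p` to `q`. -/
noncomputable def lppVal (G : ℤ × ℤ → ℝ) (p q : ℤ × ℤ) : EReal :=
  sSup {s : EReal | ∃ π : List (ℤ × ℤ), IsLatPath p q π ∧ s = (((π.map G).sum : ℝ) : EReal)}

theorem EReal.sSup_add_sSup_le_of_forall {S T U V : Set EReal}
    (h : ∀ s ∈ S, ∀ t ∈ T, ∃ u ∈ U, ∃ v ∈ V, s + t ≤ u + v) :
    sSup S + sSup T ≤ sSup U + sSup V := by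
  refine EReal.add_le_of_forall_lt fun a ha b hb => ?_
  obtain ⟨s, hs, has⟩ := lt_sSup_iff.1 ha
  obtain ⟨t, ht, hbt⟩ := lt_sSup_iff.1 hb
  obtain ⟨u, hu, v, hv, hst⟩ := h s hs t ht
  calc a + b ≤ s + t := add_le_add has.le hbt.le
    _ ≤ u + v := hst
    _ ≤ sSup U + sSup V := add_le_add (le_sSup hu) (le_sSup hv)

theorem isLatPath_iff {p q : ℤ × ℤ} {π : List (ℤ × ℤ)} :
    IsLatPath p q π ↔ π.head? = some p ∧ π.getLast? = some q ∧
    π.IsChain (fun u v => v = (u.1 + 1, u.2) ∨ v = (u.1, u.2 - 1)) :=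
  Iff.rfl

namespace IsLatPath

variable {p q v : ℤ × ℤ} {π : List (ℤ × ℤ)}

theorem eq_singleton_or_cons (h : IsLatPath p q π) :
    (π = [p] ∧ q = p) ∨
      ∃ π', π = p :: π' ∧ (IsLatPath (p.1 + 1, p.2) q π' ∨ IsLatPath (p.1, p.2 - 1) q π') := by
  obtain ⟨hhead, hlast, hchain⟩ := isLatPath_iff.1 h
  match π, hhead, hlast, hchain with
  | [u], hhead, hlast, _ =>
    simp only [List.head?_cons, List.getLast?_singleton, Option.some.injEq] at hhead hlast
    exact .inl ⟨by rw [hhead], by rw [← hlast, hhead]⟩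
  | u :: w :: π', hhead, hlast, hchain =>
    simp only [List.head?_cons, Option.some.injEq] at hhead
    subst hhead
    rw [List.isChain_cons_cons] at hchain
    have hw : IsLatPath w q (w :: π') := isLatPath_iff.2 ⟨rfl, by simpa using hlast, hchain.2⟩
    rcases hchain.1 with rfl | rfl
    exacts [.inr ⟨_, rfl, .inl hw⟩, .inr ⟨_, rfl, .inr hw⟩]

theorem head_mem (h : IsLatPath p q π) : p ∈ π :=
  List.mem_of_mem_head? h.1

theorem snd_le (h : IsLatPath p q π) : q.2 ≤ p.2 := by
  induction π generalizing p with
  | nil => exact absurd h.1 (by simp)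
  | cons u π ih =>
    rcases h.eq_singleton_or_cons with ⟨-, rfl⟩ | ⟨π', hπ, h' | h'⟩
    · exact le_rfl
    · cases hπ
      simpa using ih h'
    · cases hπ
      have := ih h'
      dsimp at this
      omega

theorem mem_of_snd_eq {a d c x : ℤ} (h : IsLatPath (a, c) (d, c) π) (hax : a ≤ x) (hxd : x ≤ d) :
    (x, c) ∈ π := by
  induction π generalizing a with
  | nil => exact absurd h.1 (by simp)
  | cons u π ih =>
    rcases h.eq_singleton_or_cons with ⟨-, hda⟩ | ⟨π', hπ, h' | h'⟩
    · obtain rfl : x = a := le_antisymm (by cases hda; exact hxd) hax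
      exact h.head_mem
    · cases hπ
      rcases hax.eq_or_lt with rfl | hax
      · exact h.head_mem
      · exact List.mem_cons_of_mem _ (ih h' hax)
    · have := h'.snd_le
      dsimp at this
      omega

theorem append_cons_iff {σ τ : List (ℤ × ℤ)} :
    IsLatPath p q (σ ++ v :: τ) ↔ IsLatPath p v (σ ++ [v]) ∧ IsLatPath v q (v :: τ) := by
  have hhead : (σ ++ v :: τ).head? = (σ ++ [v]).head? := by cases σ <;> rfl
  rw [isLatPath_iff, isLatPath_iff, isLatPath_iff, List.isChain_split, hhead,
    List.getLast?_append_cons, List.getLast?_append_cons, List.getLast?_singleton, List.head?_cons]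
  tauto

theorem exists_mem_mem_of_le_of_le {a b c d m n : ℤ} {π ρ : List (ℤ × ℤ)}
    (hπ : IsLatPath (a, n) (c, m) π) (hρ : IsLatPath (b, n) (d, m) ρ) (hab : a ≤ b)
    (hdc : d ≤ c) : ∃ v ∈ π, v ∈ ρ := by
  -- Advance one or both paths by a step so that they again start at a common height with `a ≤ b`.
  rcases hab.eq_or_lt with rfl | hab
  · exact ⟨_, hπ.head_mem, hρ.head_mem⟩
  rcases hρ.eq_singleton_or_cons with ⟨rfl, hdb⟩ | ⟨ρ', rfl, hρ' | hρ'⟩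
  · cases hdb
    exact ⟨_, hπ.mem_of_snd_eq hab.le hdc, List.mem_singleton_self _⟩
  · obtain ⟨v, hvπ, hvρ⟩ := exists_mem_mem_of_le_of_le hπ hρ' (by omega) hdc
    exact ⟨v, hvπ, List.mem_cons_of_mem _ hvρ⟩
  rcases hπ.eq_singleton_or_cons with ⟨rfl, hca⟩ | ⟨π', rfl, hπ' | hπ'⟩
  · cases hca
    have := hρ'.snd_le
    dsimp at this
    omega
  · obtain ⟨v, hvπ, hvρ⟩ := exists_mem_mem_of_le_of_le hπ' hρ (by omega) hdc
    exact ⟨v, List.mem_cons_of_mem _ hvπ, hvρ⟩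
  · obtain ⟨v, hvπ, hvρ⟩ := exists_mem_mem_of_le_of_le hπ' hρ' hab.le hdc
    exact ⟨v, List.mem_cons_of_mem _ hvπ, List.mem_cons_of_mem _ hvρ⟩
termination_by π.length + ρ.length

theorem exists_swap {p' q' : ℤ × ℤ} {ρ : List (ℤ × ℤ)} (hπ : IsLatPath p q π)
    (hρ : IsLatPath p' q' ρ) (hvπ : v ∈ π) (hvρ : v ∈ ρ) :
    ∃ π' ρ', IsLatPath p q' π' ∧ IsLatPath p' q ρ' ∧ (π' ++ ρ').Perm (π ++ ρ) := by
  obtain ⟨σ₁, σ₂, rfl⟩ := List.append_of_mem hvπ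
  obtain ⟨τ₁, τ₂, rfl⟩ := List.append_of_mem hvρ
  rw [append_cons_iff] at hπ hρ
  refine ⟨σ₁ ++ v :: τ₂, τ₁ ++ v :: σ₂, append_cons_iff.2 ⟨hπ.1, hρ.2⟩,
    append_cons_iff.2 ⟨hρ.1, hπ.2⟩, ?_⟩
  refine List.perm_iff_count.2 fun u => ?_
  simp only [List.count_append, List.count_cons]
  omega

end IsLatPath

theorem lpp_quadrangle_inequality_general (G : ℤ × ℤ → ℝ)
    (x₁ x₂ y₁ y₂ m n : ℤ)
    (h₁ : x₁ ≤ x₂) (h₃ : y₁ ≤ y₂) :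
    lppVal G (x₁, n) (y₂, m) + lppVal G (x₂, n) (y₁, m) ≤
      lppVal G (x₁, n) (y₁, m) + lppVal G (x₂, n) (y₂, m) := by
  refine EReal.sSup_add_sSup_le_of_forall ?_
  rintro _ ⟨π, hπ, rfl⟩ _ ⟨ρ, hρ, rfl⟩
  obtain ⟨v, hvπ, hvρ⟩ := hπ.exists_mem_mem_of_le_of_le hρ h₁ h₃
  obtain ⟨π', ρ', hπ', hρ', hperm⟩ := hπ.exists_swap hρ hvπ hvρ
  refine ⟨_, ⟨π', hπ', rfl⟩, _, ⟨ρ', hρ', rfl⟩, le_of_eq ?_⟩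
  rw [← EReal.coe_add, ← EReal.coe_add, ← List.sum_append, ← List.sum_append, ← List.map_append,
    ← List.map_append, (hperm.map G).sum_eq]

/-- Quadrangle inequality for lattice last passage percolation with nonnegative
weights: for `x₁ ≤ x₂ ≤ y₁ ≤ y₂` and `n ≥ m`,
`G[(x₁,n)→(y₁,m)] + G[(x₂,n)→(y₂,m)] ≥ G[(x₁,n)→(y₂,m)] + G[(x₂,n)→(y₁,m)]`. -/
theorem lpp_quadrangle_inequality (G : ℤ × ℤ → ℝ) (hG : ∀ v, 0 ≤ G v)
    (x₁ x₂ y₁ y₂ m n : ℤ)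
    (h₁ : x₁ ≤ x₂) (h₂ : x₂ ≤ y₁) (h₃ : y₁ ≤ y₂) (hmn : m ≤ n) :
    lppVal G (x₁, n) (y₂, m) + lppVal G (x₂, n) (y₁, m) ≤
      lppVal G (x₁, n) (y₁, m) + lppVal G (x₂, n) (y₂, m) :=
  lpp_quadrangle_inequality_general G x₁ x₂ y₁ y₂ m n h₁ h₃
end

section
/- Let d be a spacetime metric on ℝ². Then for every (x, s; y, t) with s < t, every geodesic from (x,s) to (y,t) is of the form {(π(r), r) : r ∈ [s, t]} for some continuous function π : [s,t] → ℝ with π(s) = x and π(t) = y, and the only compatible order on the geodesic is the order induced by the time coordinate. -/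
/-- A spacetime metric on `ℝ²` (points written `(x, s)` with `s` the time
coordinate): a directed metric of negative sign, continuous off the diagonal,
finite exactly when the time coordinates are strictly increasing (or on the
diagonal) and `−∞` elsewhere, satisfying the metric composition law (with the
supremum attained), and such that all geodesics between ordered endpoints are
contained in a compact product set. -/
def SpacetimeMetric (d : ℝ × ℝ → ℝ × ℝ → EReal) : Prop :=
  (∀ u, d u u = 0) ∧
  (∀ u v w, d u v + d v w ≤ d u w) ∧
  (∀ u v, d u v ≠ ⊤) ∧
  (∀ u v : ℝ × ℝ, u ≠ v → (d u v ≠ ⊥ ↔ u.2 < v.2)) ∧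
  ContinuousOn (fun p : (ℝ × ℝ) × (ℝ × ℝ) => d p.1 p.2) {p | p.1 ≠ p.2} ∧
  (∀ x s y t r : ℝ, s < r → r < t →
    (d (x, s) (y, t) = ⨆ z : ℝ, (d (x, s) (z, r) + d (z, r) (y, t))) ∧
    ∃ z : ℝ, d (x, s) (y, t) = d (x, s) (z, r) + d (z, r) (y, t)) ∧
  (∀ x s y t : ℝ, s < t → ∃ a b : ℝ, ∀ A : Set (ℝ × ℝ),
    IsGeodesic d (x, s) (y, t) A → A ⊆ Set.Icc a b ×ˢ Set.Icc s t)


open Filter Topology Set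

namespace SpacetimeMetric

variable {d : ℝ × ℝ → ℝ × ℝ → EReal} {u v w : ℝ × ℝ}

theorem self_eq_zero (hd : SpacetimeMetric d) (u : ℝ × ℝ) : d u u = 0 := hd.1 u

theorem add_le (hd : SpacetimeMetric d) (u v w : ℝ × ℝ) : d u v + d v w ≤ d u w := hd.2.1 u v w

theorem ne_top (hd : SpacetimeMetric d) (u v : ℝ × ℝ) : d u v ≠ ⊤ := hd.2.2.1 u v

theorem ne_bot_iff (hd : SpacetimeMetric d) (huv : u ≠ v) : d u v ≠ ⊥ ↔ u.2 < v.2 :=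
  hd.2.2.2.1 u v huv

theorem ne_bot_of_snd_lt (hd : SpacetimeMetric d) (h : u.2 < v.2) : d u v ≠ ⊥ :=
  (hd.ne_bot_iff (ne_of_apply_ne Prod.snd h.ne)).2 h

theorem eq_bot_of_snd_le (hd : SpacetimeMetric d) (huv : u ≠ v) (h : v.2 ≤ u.2) : d u v = ⊥ :=
  not_not.1 fun h' => h.not_gt ((hd.ne_bot_iff huv).1 h')

theorem addLECancellable (hd : SpacetimeMetric d) (h : u.2 < v.2) : AddLECancellable (d u v) := by
  rw [← EReal.coe_toReal (hd.ne_top u v) (hd.ne_bot_of_snd_lt h)]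
  exact EReal.addLECancellable_coe _

theorem continuousAt (hd : SpacetimeMetric d) (huv : u ≠ v) :
    ContinuousAt (fun z : (ℝ × ℝ) × (ℝ × ℝ) => d z.1 z.2) (u, v) :=
  hd.2.2.2.2.1.continuousAt ((isOpen_ne_fun continuous_fst continuous_snd).mem_nhds huv)

theorem exists_add_eq (hd : SpacetimeMetric d) {r : ℝ} (hur : u.2 < r) (hrw : r < w.2) :
    ∃ z : ℝ, d u w = d u (z, r) + d (z, r) w := by
  simpa using (hd.2.2.2.2.2.1 u.1 u.2 w.1 w.2 r hur hrw).2

theorem exists_forall_isGeodesic_subset (hd : SpacetimeMetric d) (huw : u.2 < w.2) :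
    ∃ a b : ℝ, ∀ A, IsGeodesic d u w A → A ⊆ Icc a b ×ˢ Icc u.2 w.2 := by
  simpa using hd.2.2.2.2.2.2 u.1 u.2 w.1 w.2 huw

/-- Both sides are continuous at pairwise distinct triples, since `d` is continuous off the
diagonal and never `⊤`. -/
theorem add_eq_of_mem_closure (hd : SpacetimeMetric d) {T : Set ((ℝ × ℝ) × (ℝ × ℝ) × (ℝ × ℝ))}
    (hT : ∀ τ ∈ T, d τ.1 τ.2.2 = d τ.1 τ.2.1 + d τ.2.1 τ.2.2) (hτ : (u, v, w) ∈ closure T)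
    (huv : u ≠ v) (hvw : v ≠ w) (huw : u ≠ w) : d u w = d u v + d v w := by
  have hcont : ∀ {f g : (ℝ × ℝ) × (ℝ × ℝ) × (ℝ × ℝ) → ℝ × ℝ}, Continuous f → Continuous g →
      f (u, v, w) ≠ g (u, v, w) → ContinuousAt (fun τ => d (f τ) (g τ)) (u, v, w) :=
    fun {f g} hf hg hfg =>
      (hd.continuousAt hfg).comp (f := fun τ => (f τ, g τ)) (hf.prodMk hg).continuousAt
  have hf : ContinuousAt (fun τ : (ℝ × ℝ) × (ℝ × ℝ) × (ℝ × ℝ) => d τ.1 τ.2.2) (u, v, w) :=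
    hcont (by fun_prop) (by fun_prop) huw
  have hg : ContinuousAt (fun τ : (ℝ × ℝ) × (ℝ × ℝ) × (ℝ × ℝ) => d τ.1 τ.2.1 + d τ.2.1 τ.2.2)
      (u, v, w) :=
    (EReal.continuousAt_add (Or.inl (hd.ne_top u v)) (Or.inr (hd.ne_top v w))).comp
      ((hcont (by fun_prop) (by fun_prop) huv).prodMk (hcont (by fun_prop) (by fun_prop) hvw))
  have := mem_closure_iff_nhdsWithin_neBot.1 hτ
  exact tendsto_nhds_unique
    (Tendsto.congr' (eventually_nhdsWithin_of_forall hT) (hf.tendsto.mono_left nhdsWithin_le_nhds))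
    (hg.tendsto.mono_left nhdsWithin_le_nhds)

theorem compatibleOrder_iff (hd : SpacetimeMetric d) {p q : ℝ × ℝ} (hpq : p.2 < q.2)
    {A : Set (ℝ × ℝ)} (hp : p ∈ A) (hq : q ∈ A) {le : ℝ × ℝ → ℝ × ℝ → Prop}
    (hle : CompatibleOrder d p q A le) {a b : ℝ × ℝ} (ha : a ∈ A) (hb : b ∈ A) :
    le a b ↔ a.2 ≤ b.2 := by
  obtain ⟨hrefl, -, -, htotal, hends, hadd⟩ := hle
  -- `d p q` is finite and splits along `p, a, b, q`, so `d a b` is finite as well.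
  have hlt : ∀ {a b}, a ∈ A → b ∈ A → a ≠ b → le a b → a.2 < b.2 := by
    intro a b ha hb hab hle
    refine (hd.ne_bot_iff hab).1 fun hbot => hd.ne_bot_of_snd_lt hpq ?_
    rw [hadd p hp b hb q hq (hends b hb).1 (hends b hb).2, hadd p hp a ha b hb (hends a ha).1 hle,
      hbot, EReal.add_bot, EReal.bot_add]
  rcases eq_or_ne a b with rfl | hab
  · exact iff_of_true (hrefl a ha) le_rfl
  refine ⟨fun h => (hlt ha hb hab h).le, fun h => (htotal a ha b hb).resolve_right fun hba => ?_⟩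
  exact h.not_gt (hlt hb ha hab.symm hba)

end SpacetimeMetric

/-- The time order is a compatible order on `B` (strict inequalities suffice, by `injOn`). -/
structure IsTimeGeodesicSet (d : ℝ × ℝ → ℝ × ℝ → EReal) (p q : ℝ × ℝ) (B : Set (ℝ × ℝ)) :
    Prop where
  left_mem : p ∈ B
  right_mem : q ∈ B
  injOn : InjOn Prod.snd B
  mapsTo : MapsTo Prod.snd B (Icc p.2 q.2)
  add_eq : ∀ a ∈ B, ∀ b ∈ B, ∀ c ∈ B, a.2 < b.2 → b.2 < c.2 → d a c = d a b + d b c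

namespace IsTimeGeodesicSet

variable {d : ℝ × ℝ → ℝ × ℝ → EReal} {p q a b c : ℝ × ℝ} {B : Set (ℝ × ℝ)}

theorem add_eq_of_le (hB : IsTimeGeodesicSet d p q B) (hd : SpacetimeMetric d) (ha : a ∈ B)
    (hb : b ∈ B) (hc : c ∈ B) (hab : a.2 ≤ b.2) (hbc : b.2 ≤ c.2) : d a c = d a b + d b c := by
  rcases hab.eq_or_lt with hab | hab
  · rw [hB.injOn ha hb hab, hd.self_eq_zero, zero_add]
  rcases hbc.eq_or_lt with hbc | hbc
  · rw [hB.injOn hb hc hbc, hd.self_eq_zero, add_zero]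
  exact hB.add_eq a ha b hb c hc hab hbc

theorem isGeodesicSet (hB : IsTimeGeodesicSet d p q B) (hd : SpacetimeMetric d) :
    IsGeodesicSet d p q B :=
  ⟨hB.left_mem, hB.right_mem, fun a b => a.2 ≤ b.2, fun _ _ => le_rfl,
    fun _ ha _ hb h h' => hB.injOn ha hb (le_antisymm h h'), fun _ _ _ _ _ _ => le_trans,
    fun _ _ _ _ => le_total _ _, fun _ hz => hB.mapsTo hz,
    fun _ ha _ hb _ hc => hB.add_eq_of_le hd ha hb hc⟩

theorem add_eq_of_mem_closure (hB : IsTimeGeodesicSet d p q B) (hd : SpacetimeMetric d)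
    (ha : a ∈ closure B) (hb : b ∈ closure B) (hc : c ∈ closure B) (hab : a.2 < b.2)
    (hbc : b.2 < c.2) : d a c = d a b + d b c := by
  let W := {τ : (ℝ × ℝ) × (ℝ × ℝ) × (ℝ × ℝ) | τ.1.2 < τ.2.1.2} ∩ {τ | τ.2.1.2 < τ.2.2.2}
  have hW : IsOpen W :=
    (isOpen_lt (by fun_prop) (by fun_prop)).inter (isOpen_lt (by fun_prop) (by fun_prop))
  have hτ : (a, b, c) ∈ closure (W ∩ B ×ˢ B ×ˢ B) :=
    hW.inter_closure ⟨⟨hab, hbc⟩, by rw [closure_prod_eq, closure_prod_eq]; exact ⟨ha, hb, hc⟩⟩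
  exact hd.add_eq_of_mem_closure
    (fun τ hτ => hB.add_eq _ hτ.2.1 _ hτ.2.2.1 _ hτ.2.2.2 hτ.1.1 hτ.1.2) hτ
    (ne_of_apply_ne Prod.snd hab.ne) (ne_of_apply_ne Prod.snd hbc.ne)
    (ne_of_apply_ne Prod.snd (hab.trans hbc).ne)

/-- A limit `Q` of later points of `B` is the only point of `closure B` at its time: another one,
`P`, would satisfy `d P q = d P Q + d Q q` in the limit, although `d P Q = ⊥ < d P q`. -/
theorem eq_of_mem_closure_later (hB : IsTimeGeodesicSet d p q B) (hd : SpacetimeMetric d)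
    {P Q : ℝ × ℝ} (hP : P ∈ closure B) (hQ : Q ∈ closure {b ∈ B | Q.2 < b.2}) (h : P.2 = Q.2) :
    P = Q := by
  by_contra hPQ
  obtain ⟨b, hb, hQb⟩ := closure_nonempty_iff.1 ⟨Q, hQ⟩
  have hQq : Q.2 < q.2 := hQb.trans_le (hB.mapsTo hb).2
  have hT : ∀ τ ∈ {P} ×ˢ {b ∈ B | Q.2 < b.2} ×ˢ {q},
      d τ.1 τ.2.2 = d τ.1 τ.2.1 + d τ.2.1 τ.2.2 := by
    rintro ⟨_, b, _⟩ ⟨rfl, ⟨hb, hQb⟩, rfl⟩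
    rcases (hB.mapsTo hb).2.eq_or_lt with hbq | hbq
    · rw [hB.injOn hb hB.right_mem hbq, hd.self_eq_zero, add_zero]
    · exact hB.add_eq_of_mem_closure hd hP (subset_closure hb) (subset_closure hB.right_mem)
        (h ▸ hQb) hbq
  have hsplit := hd.add_eq_of_mem_closure hT
    (by rw [closure_prod_eq, closure_prod_eq, closure_singleton, closure_singleton]
        exact ⟨rfl, hQ, rfl⟩)
    hPQ (ne_of_apply_ne Prod.snd hQq.ne) (ne_of_apply_ne Prod.snd (h ▸ hQq).ne)
  rw [hd.eq_bot_of_snd_le hPQ h.ge, EReal.bot_add] at hsplit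
  exact hd.ne_bot_of_snd_lt (h ▸ hQq) hsplit

theorem eq_of_mem_closure_earlier (hB : IsTimeGeodesicSet d p q B) (hd : SpacetimeMetric d)
    {P Q : ℝ × ℝ} (hP : P ∈ closure B) (hQ : Q ∈ closure {b ∈ B | b.2 < Q.2}) (h : P.2 = Q.2) :
    P = Q := by
  by_contra hPQ
  obtain ⟨b, hb, hbQ⟩ := closure_nonempty_iff.1 ⟨Q, hQ⟩
  have hpQ : p.2 < Q.2 := (hB.mapsTo hb).1.trans_lt hbQ
  have hT : ∀ τ ∈ {p} ×ˢ {b ∈ B | b.2 < Q.2} ×ˢ {P},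
      d τ.1 τ.2.2 = d τ.1 τ.2.1 + d τ.2.1 τ.2.2 := by
    rintro ⟨_, b, _⟩ ⟨rfl, ⟨hb, hbQ⟩, rfl⟩
    rcases (hB.mapsTo hb).1.eq_or_lt with hpb | hpb
    · rw [← hB.injOn hB.left_mem hb hpb, hd.self_eq_zero, zero_add]
    · exact hB.add_eq_of_mem_closure hd (subset_closure hB.left_mem) (subset_closure hb) hP
        hpb (h ▸ hbQ)
  have hsplit := hd.add_eq_of_mem_closure hT
    (by rw [closure_prod_eq, closure_prod_eq, closure_singleton, closure_singleton]
        exact ⟨rfl, hQ, rfl⟩)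
    (ne_of_apply_ne Prod.snd hpQ.ne) (Ne.symm hPQ) (ne_of_apply_ne Prod.snd (h ▸ hpQ).ne)
  rw [hd.eq_bot_of_snd_le (Ne.symm hPQ) h.le, EReal.add_bot] at hsplit
  exact hd.ne_bot_of_snd_lt (h ▸ hpQ) hsplit

theorem injOn_closure (hB : IsTimeGeodesicSet d p q B) (hd : SpacetimeMetric d) :
    InjOn Prod.snd (closure B) := by
  suffices key : ∀ P ∈ closure B, ∀ Q ∈ closure B, Q ∉ B → P.2 = Q.2 → P = Q by
    intro P hP Q hQ h
    by_cases hQB : Q ∈ B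
    · by_cases hPB : P ∈ B
      · exact hB.injOn hPB hQB h
      · exact (key Q hQ P hP hPB h.symm).symm
    · exact key P hP Q hQ hQB h
  intro P hP Q hQ hQB h
  have hsplit : B ⊆ {b ∈ B | b.2 < Q.2} ∪ {b ∈ B | Q.2 < b.2} ∪ {b ∈ B | b.2 = Q.2} := by
    intro b hb
    rcases lt_trichotomy b.2 Q.2 with h | h | h <;> simp [hb, h]
  have hclosed : IsClosed {b ∈ B | b.2 = Q.2} :=
    Subsingleton.isClosed fun a ha b hb => hB.injOn ha.1 hb.1 (ha.2.trans hb.2.symm)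
  have hQ' := closure_mono hsplit hQ
  rw [closure_union, closure_union, hclosed.closure_eq] at hQ'
  rcases hQ' with (hlt | hgt) | hQB'
  · exact hB.eq_of_mem_closure_earlier hd hP hlt h
  · exact hB.eq_of_mem_closure_later hd hP hgt h
  · exact absurd hQB'.1 hQB

protected theorem closure (hB : IsTimeGeodesicSet d p q B) (hd : SpacetimeMetric d) :
    IsTimeGeodesicSet d p q (closure B) where
  left_mem := subset_closure hB.left_mem
  right_mem := subset_closure hB.right_mem
  injOn := hB.injOn_closure hd
  mapsTo := fun _ hz => closure_minimal hB.mapsTo (isClosed_Icc.preimage continuous_snd) hz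
  add_eq := fun _ ha _ hb _ hc => hB.add_eq_of_mem_closure hd ha hb hc

theorem add_eq_of_gap (hB : IsTimeGeodesicSet d p q B) (hd : SpacetimeMetric d) {P Q Z : ℝ × ℝ}
    (hP : P ∈ B) (hQ : Q ∈ B) (hPZ : P.2 < Z.2) (hZQ : Z.2 < Q.2)
    (hgap : ∀ b ∈ B, b.2 ≤ P.2 ∨ Q.2 ≤ b.2) (hZ : d P Q = d P Z + d Z Q) (ha : a ∈ B)
    (hc : c ∈ B) (haZ : a.2 < Z.2) (hZc : Z.2 < c.2) : d a c = d a Z + d Z c := by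
  have haP : a.2 ≤ P.2 := (hgap a ha).resolve_right fun h => (h.trans_lt (haZ.trans hZQ)).false
  have hQc : Q.2 ≤ c.2 := (hgap c hc).resolve_left fun h => ((hPZ.trans hZc).trans_le h).false
  refine le_antisymm ?_ (hd.add_le a Z c)
  calc d a c = d a P + (d P Z + d Z Q) + d Q c := by
        rw [← hZ, hB.add_eq_of_le hd ha hP hc haP (hPZ.trans hZc).le,
          hB.add_eq_of_le hd hP hQ hc (hPZ.trans hZQ).le hQc, add_assoc]
    _ = (d a P + d P Z) + (d Z Q + d Q c) := by simp only [add_assoc]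
    _ ≤ d a Z + d Z c := add_le_add (hd.add_le a P Z) (hd.add_le Z Q c)

protected theorem insert (hB : IsTimeGeodesicSet d p q B) (hd : SpacetimeMetric d) {P Q Z : ℝ × ℝ}
    (hP : P ∈ B) (hQ : Q ∈ B) (hPZ : P.2 < Z.2) (hZQ : Z.2 < Q.2)
    (hgap : ∀ b ∈ B, b.2 ≤ P.2 ∨ Q.2 ≤ b.2) (hZ : d P Q = d P Z + d Z Q) :
    IsTimeGeodesicSet d p q (insert Z B) where
  left_mem := mem_insert_of_mem _ hB.left_mem
  right_mem := mem_insert_of_mem _ hB.right_mem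
  injOn := by
    have hZB : Z.2 ∉ Prod.snd '' B := by
      rintro ⟨b, hb, hbZ⟩
      rcases hgap b hb with h | h
      · exact (hbZ ▸ h).not_gt hPZ
      · exact (hbZ ▸ h).not_gt hZQ
    exact (injOn_insert fun hZB' => hZB ⟨Z, hZB', rfl⟩).2 ⟨hB.injOn, hZB⟩
  mapsTo := by
    rintro z (rfl | hz)
    · exact ⟨(hB.mapsTo hP).1.trans hPZ.le, hZQ.le.trans (hB.mapsTo hQ).2⟩
    · exact hB.mapsTo hz
  add_eq := by
    have hthrough : ∀ {a c}, a ∈ B → c ∈ B → a.2 < Z.2 → Z.2 < c.2 → d a c = d a Z + d Z c :=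
      hB.add_eq_of_gap hd hP hQ hPZ hZQ hgap hZ
    have hpZ : p.2 < Z.2 := (hB.mapsTo hP).1.trans_lt hPZ
    have hZq : Z.2 < q.2 := hZQ.trans_le (hB.mapsTo hQ).2
    rintro a (rfl | ha) b (rfl | hb) c (rfl | hc) hab hbc
    · exact absurd hab (lt_irrefl _)
    · exact absurd hab (lt_irrefl _)
    · exact absurd (hab.trans hbc) (lt_irrefl _)
    · refine ((hd.addLECancellable hpZ).inj).1 ?_
      rw [← hthrough hB.left_mem hc hpZ (hab.trans hbc), ← add_assoc,
        ← hthrough hB.left_mem hb hpZ hab,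
        hB.add_eq_of_le hd hB.left_mem hb hc (hB.mapsTo hb).1 hbc.le]
    · exact absurd hbc (lt_irrefl _)
    · exact hthrough ha hc hab hbc
    · refine ((hd.addLECancellable hZq).inj_left).1 ?_
      rw [← hthrough ha hB.right_mem (hab.trans hbc) hZq, add_assoc,
        ← hthrough hb hB.right_mem hbc hZq,
        hB.add_eq_of_le hd ha hb hB.right_mem hab.le (hB.mapsTo hb).2]
    · exact hB.add_eq a ha b hb c hc hab hbc

/-- A time `r` missed by a compact `B` lies in a gap between a last earlier point `P` and a first
later point `Q`, and the metric composition law provides a point at time `r` to fill it. -/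
theorem exists_insert (hB : IsTimeGeodesicSet d p q B) (hd : SpacetimeMetric d)
    (hBc : IsCompact B) {r : ℝ} (hpr : p.2 < r) (hrq : r < q.2) (hr : r ∉ Prod.snd '' B) :
    ∃ z : ℝ, IsTimeGeodesicSet d p q (insert (z, r) B) := by
  obtain ⟨P, ⟨hP, hPr⟩, hPmax⟩ :=
    (hBc.inter_right (isClosed_le continuous_snd continuous_const)).exists_isMaxOn
      ⟨p, hB.left_mem, hpr.le⟩ continuous_snd.continuousOn
  obtain ⟨Q, ⟨hQ, hrQ⟩, hQmin⟩ :=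
    (hBc.inter_right (isClosed_le continuous_const continuous_snd)).exists_isMinOn
      ⟨q, hB.right_mem, hrq.le⟩ continuous_snd.continuousOn
  have hPr' : P.2 < r := hPr.lt_of_ne fun h => hr ⟨P, hP, h⟩
  have hrQ' : r < Q.2 := hrQ.lt_of_ne fun h => hr ⟨Q, hQ, h.symm⟩
  obtain ⟨z, hz⟩ := hd.exists_add_eq hPr' hrQ'
  refine ⟨z, hB.insert hd hP hQ hPr' hrQ' (fun b hb => ?_) hz⟩
  rcases le_total b.2 r with h | h
  · exact .inl (hPmax ⟨hb, h⟩)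
  · exact .inr (hQmin ⟨hb, h⟩)

end IsTimeGeodesicSet

theorem IsGeodesicSet.isTimeGeodesicSet {d : ℝ × ℝ → ℝ × ℝ → EReal} {p q : ℝ × ℝ}
    {A : Set (ℝ × ℝ)} (hA : IsGeodesicSet d p q A) (hd : SpacetimeMetric d) (hpq : p.2 < q.2) :
    IsTimeGeodesicSet d p q A := by
  obtain ⟨hp, hq, le, hle⟩ := hA
  have hiff {a b} (ha : a ∈ A) (hb : b ∈ A) := hd.compatibleOrder_iff hpq hp hq hle ha hb
  exact
    { left_mem := hp
      right_mem := hq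
      injOn := fun a ha b hb h => hle.2.1 a ha b hb ((hiff ha hb).2 h.le) ((hiff hb ha).2 h.ge)
      mapsTo := fun z hz =>
        ⟨(hiff hp hz).1 (hle.2.2.2.2.1 z hz).1, (hiff hz hq).1 (hle.2.2.2.2.1 z hz).2⟩
      add_eq := fun a ha b hb c hc hab hbc =>
        hle.2.2.2.2.2 a ha b hb c hc ((hiff ha hb).2 hab.le) ((hiff hb hc).2 hbc.le) }

namespace IsGeodesic

variable {d : ℝ × ℝ → ℝ × ℝ → EReal} {p q : ℝ × ℝ} {A : Set (ℝ × ℝ)}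

theorem isClosed (hA : IsGeodesic d p q A) (hd : SpacetimeMetric d) (hpq : p.2 < q.2) :
    IsClosed A :=
  closure_eq_iff_isClosed.1 <| hA.2 _
    (((hA.1.isTimeGeodesicSet hd hpq).closure hd).isGeodesicSet hd) subset_closure

theorem isCompact (hA : IsGeodesic d p q A) (hd : SpacetimeMetric d) (hpq : p.2 < q.2) :
    IsCompact A := by
  obtain ⟨a, b, hab⟩ := hd.exists_forall_isGeodesic_subset hpq
  exact (isCompact_Icc.prod isCompact_Icc).of_isClosed_subset (hA.isClosed hd hpq) (hab A hA)

theorem image_snd (hA : IsGeodesic d p q A) (hd : SpacetimeMetric d) (hpq : p.2 < q.2) :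
    Prod.snd '' A = Icc p.2 q.2 := by
  have hB := hA.1.isTimeGeodesicSet hd hpq
  refine hB.mapsTo.image_subset.antisymm fun r hr => ?_
  by_contra hrA
  have hpr : p.2 < r := hr.1.lt_of_ne fun h => hrA ⟨p, hB.left_mem, h⟩
  have hrq : r < q.2 := hr.2.lt_of_ne fun h => hrA ⟨q, hB.right_mem, h.symm⟩
  obtain ⟨z, hz⟩ := hB.exists_insert hd (hA.isCompact hd hpq) hpr hrq hrA
  have hzA := hA.2 _ (hz.isGeodesicSet hd) (subset_insert _ _)
  exact hrA ⟨(z, r), hzA ▸ mem_insert _ _, rfl⟩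

end IsGeodesic

theorem IsCompact.exists_continuousOn_eq_graph {X Y : Type*} [TopologicalSpace X] [Nonempty X]
    [TopologicalSpace Y] [T2Space Y] {A : Set (X × Y)} (hA : IsCompact A)
    (hinj : InjOn Prod.snd A) :
    ∃ π : Y → X, ContinuousOn π (Prod.snd '' A) ∧
      A = {z : X × Y | z.2 ∈ Prod.snd '' A ∧ z.1 = π z.2} := by
  let π := Function.extend (A.domRestrict Prod.snd) (fun a : A => a.1.1)
    fun _ => Classical.arbitrary X
  have hπ : ∀ a ∈ A, π a.2 = a.1 := fun a ha => hinj.injective.extend_apply _ _ ⟨a, ha⟩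
  refine ⟨π, ?_, ?_⟩
  · -- The preimage of a closed `F` is the projection of the compact set `A ∩ (F × Y)`.
    refine continuousOn_iff_isClosed.2 fun F hF =>
      ⟨Prod.snd '' (A ∩ Prod.fst ⁻¹' F),
        ((hA.inter_right (hF.preimage continuous_fst)).image continuous_snd).isClosed, ?_⟩
    ext r
    constructor
    · rintro ⟨hrF, a, ha, rfl⟩
      exact ⟨⟨a, ⟨ha, by simpa only [mem_preimage, hπ a ha] using hrF⟩, rfl⟩, a, ha, rfl⟩
    · rintro ⟨⟨a, ⟨ha, haF⟩, rfl⟩, -⟩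
      exact ⟨by simpa only [mem_preimage, hπ a ha] using haF, a, ha, rfl⟩
  · ext z
    constructor
    · intro hz
      exact ⟨⟨z, hz, rfl⟩, (hπ z hz).symm⟩
    · rintro ⟨⟨a, ha, haz⟩, hz⟩
      rwa [show z = a from Prod.ext (by rw [hz, ← haz, hπ a ha]) haz.symm]

/-- In a spacetime metric, every geodesic from `(x,s)` to `(y,t)` (with
`s < t`) is the graph `{(π(r), r) : r ∈ [s,t]}` of a continuous function `π`
with `π(s) = x`, `π(t) = y`, and the only compatible order on the geodesic is
the order induced by the time coordinate. -/
theorem spacetime_geodesic_is_graph (d : ℝ × ℝ → ℝ × ℝ → EReal)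
    (hd : SpacetimeMetric d) (x s y t : ℝ) (hst : s < t)
    (A : Set (ℝ × ℝ)) (hA : IsGeodesic d (x, s) (y, t) A) :
    (∃ π : ℝ → ℝ, ContinuousOn π (Set.Icc s t) ∧ π s = x ∧ π t = y ∧
      A = {p : ℝ × ℝ | p.2 ∈ Set.Icc s t ∧ p.1 = π p.2}) ∧
    (∀ le : ℝ × ℝ → ℝ × ℝ → Prop,
      CompatibleOrder d (x, s) (y, t) A le →
      ∀ a ∈ A, ∀ b ∈ A, (le a b ↔ a.2 ≤ b.2)) := by
  obtain ⟨π, hπ, hgraph⟩ := (hA.isCompact hd hst).exists_continuousOn_eq_graph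
    (hA.1.isTimeGeodesicSet hd hst).injOn
  rw [hA.image_snd hd hst] at hπ hgraph
  have hπ_eq : ∀ z ∈ A, π z.2 = z.1 := fun z hz => ((hgraph.subset hz).2).symm
  exact ⟨⟨π, hπ, hπ_eq _ hA.1.1, hπ_eq _ hA.1.2.1, hgraph⟩,
    fun _ hle _ ha _ hb => hd.compatibleOrder_iff hst hA.1.1 hA.1.2.1 hle ha hb⟩
end

section
/- Let d be a spacetime metric on ℝ² and let (u, v) with u = (x,s), v = (y,t), s < t. A geodesic set A from u to v is a geodesic (i.e. a maximal geodesic set) if and only if A is a connected subset of ℝ². -/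
open Filter Topology

section SpacetimeAux

lemma ereal_cancel {x y x' y' : EReal} (hx : x ≠ ⊥) (hy : y ≠ ⊥)
    (hx' : x' ≠ ⊤) (hy' : y' ≠ ⊤)
    (h : x + y = x' + y') (h1 : x ≤ x') (h2 : y ≤ y') : x = x' ∧ y = y' := by
  have hxt : x ≠ ⊤ := fun hh => hx' (top_le_iff.mp (hh ▸ h1))
  have hyt : y ≠ ⊤ := fun hh => hy' (top_le_iff.mp (hh ▸ h2))
  have hx'b : x' ≠ ⊥ := fun hh => hx (le_bot_iff.mp (hh ▸ h1))
  have hy'b : y' ≠ ⊥ := fun hh => hy (le_bot_iff.mp (hh ▸ h2))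
  lift x to ℝ using ⟨hxt, hx⟩
  lift y to ℝ using ⟨hyt, hy⟩
  lift x' to ℝ using ⟨hx', hx'b⟩
  lift y' to ℝ using ⟨hy', hy'b⟩
  rw [← EReal.coe_add, ← EReal.coe_add, EReal.coe_eq_coe_iff] at h
  rw [EReal.coe_le_coe_iff] at h1 h2
  constructor <;> rw [EReal.coe_eq_coe_iff] <;> linarith

lemma tendsto_d {d : ℝ × ℝ → ℝ × ℝ → EReal}
    (hcont : ContinuousOn (fun p : (ℝ × ℝ) × (ℝ × ℝ) => d p.1 p.2) {p | p.1 ≠ p.2})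
    {p q : ℝ × ℝ} (hne : p ≠ q) {pn qn : ℕ → ℝ × ℝ}
    (hp : Tendsto pn atTop (𝓝 p)) (hq : Tendsto qn atTop (𝓝 q)) :
    Tendsto (fun n => d (pn n) (qn n)) atTop (𝓝 (d p q)) := by
  have hS : IsOpen {p : (ℝ × ℝ) × (ℝ × ℝ) | p.1 ≠ p.2} :=
    isOpen_compl_iff.mpr isClosed_diagonal
  have hmem : ((p, q) : (ℝ × ℝ) × (ℝ × ℝ)) ∈ {p : (ℝ × ℝ) × (ℝ × ℝ) | p.1 ≠ p.2} := hne
  have hF : Tendsto (fun n => (pn n, qn n)) atTop (𝓝 (p, q)) := hp.prodMk_nhds hq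
  have hev : ∀ᶠ n in atTop, (pn n, qn n) ∈ {p : (ℝ × ℝ) × (ℝ × ℝ) | p.1 ≠ p.2} :=
    hF.eventually (hS.eventually_mem hmem)
  exact ((hcont _ hmem).tendsto).comp
    (tendsto_nhdsWithin_of_tendsto_nhds_of_eventually_within _ hF hev)

lemma tendsto_add_ereal {a b : EReal} (ha : a ≠ ⊤) (hb : b ≠ ⊤) {f g : ℕ → EReal}
    (hf : Tendsto f atTop (𝓝 a)) (hg : Tendsto g atTop (𝓝 b)) :
    Tendsto (fun n => f n + g n) atTop (𝓝 (a + b)) :=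
  (EReal.continuousAt_add (Or.inl ha) (Or.inr hb)).tendsto.comp (hf.prodMk_nhds hg)

lemma canon {d : ℝ × ℝ → ℝ × ℝ → EReal} (h0 : ∀ u, d u u = 0)
    (hbot : ∀ u v : ℝ × ℝ, u ≠ v → (d u v ≠ ⊥ ↔ u.2 < v.2))
    {x s y t : ℝ} (hst : s < t) {A : Set (ℝ × ℝ)}
    (hA : IsGeodesicSet d (x, s) (y, t) A) :
    (∀ p ∈ A, s ≤ p.2 ∧ p.2 ≤ t) ∧
    (∀ p ∈ A, ∀ q ∈ A, p.2 = q.2 → p = q) ∧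
    (∀ p ∈ A, ∀ q ∈ A, ∀ w ∈ A, p.2 ≤ q.2 → q.2 ≤ w.2 → d p w = d p q + d q w) := by
  obtain ⟨hu, hv, le, h1, h2, h3, h4, h5, h6⟩ := hA
  set u : ℝ × ℝ := (x, s) with hu'
  set v : ℝ × ℝ := (y, t) with hv'
  have huv : u ≠ v := fun h => hst.ne (congrArg Prod.snd h)
  have hduv : d u v ≠ ⊥ := (hbot u v huv).mpr hst
  have key : ∀ a ∈ A, ∀ b ∈ A, le a b → a = b ∨ a.2 < b.2 := by
    intro a ha b hb hab
    by_cases hab' : a = b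
    · exact Or.inl hab'
    · right
      have e1 : d u v = d u b + d b v := h6 u hu b hb v hv (h5 b hb).1 (h5 b hb).2
      have e2 : d u b = d u a + d a b := h6 u hu a ha b hb (h5 a ha).1 hab
      have : d a b ≠ ⊥ := by
        intro hb'
        rw [e2, hb', EReal.add_bot, EReal.bot_add] at e1
        exact hduv e1
      exact (hbot a b hab').mp this
  have c2 : ∀ p ∈ A, ∀ q ∈ A, p.2 = q.2 → p = q := by
    intro p hp q hq hpq
    rcases h4 p hp q hq with h | h
    · rcases key p hp q hq h with h' | h'
      · exact h'
      · exact absurd (hpq ▸ h') (lt_irrefl _)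
    · rcases key q hq p hp h with h' | h'
      · exact h'.symm
      · exact absurd (hpq ▸ h') (lt_irrefl _)
  have lelt : ∀ a ∈ A, ∀ b ∈ A, a.2 < b.2 → le a b := by
    intro a ha b hb hab
    rcases h4 a ha b hb with h | h
    · exact h
    · rcases key b hb a ha h with h' | h'
      · exact h' ▸ h
      · exact absurd (h'.trans hab) (lt_irrefl _)
  refine ⟨?_, c2, ?_⟩
  · intro p hp
    constructor
    · rcases key u hu p hp (h5 p hp).1 with h | h
      · exact le_of_eq (congrArg Prod.snd h)
      · exact h.le
    · rcases key p hp v hv (h5 p hp).2 with h | h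
      · exact le_of_eq (congrArg Prod.snd h)
      · exact h.le
  · intro p hp q hq w hw hpq hqw
    rcases eq_or_lt_of_le hpq with h | h
    · rw [c2 p hp q hq h, h0, zero_add]
    · rcases eq_or_lt_of_le hqw with h' | h'
      · rw [c2 q hq w hw h', h0, add_zero]
      · exact h6 p hp q hq w hw (lelt p hp q hq h) (lelt q hq w hw h')

lemma closure_isGeodesicSet {d : ℝ × ℝ → ℝ × ℝ → EReal} (hd : SpacetimeMetric d)
    {x s y t : ℝ} (hst : s < t) {A : Set (ℝ × ℝ)}
    (hA : IsGeodesicSet d (x, s) (y, t) A) :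
    IsGeodesicSet d (x, s) (y, t) (closure A) := by
  obtain ⟨h0, hsuper, htop, hbot, hcont, hcomp, hbox⟩ := hd
  obtain ⟨c1, c2, c3⟩ := canon h0 hbot hst hA
  obtain ⟨hu, hv, -⟩ := hA
  set u : ℝ × ℝ := (x, s) with hu'
  set v : ℝ × ℝ := (y, t) with hv'
  have huv : u ≠ v := fun h => hst.ne (congrArg Prod.snd h)
  have hduv : d u v ≠ ⊥ := (hbot u v huv).mpr hst
  -- bounds on closure
  have cb : ∀ w ∈ closure A, s ≤ w.2 ∧ w.2 ≤ t := by
    intro w hw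
    have hsub : closure A ⊆ Prod.snd ⁻¹' Set.Icc s t :=
      closure_minimal (fun p hp => ⟨(c1 p hp).1, (c1 p hp).2⟩)
        (isClosed_Icc.preimage continuous_snd)
    exact hsub hw
  -- strict time bounds off the endpoints
  have cstrict : ∀ w ∈ closure A, w ≠ u → w ≠ v → s < w.2 ∧ w.2 < t := by
    intro w hw hwu hwv
    obtain ⟨wn, hwn, hwt⟩ := mem_closure_iff_seq_limit.mp hw
    have t1 : Tendsto (fun n => d u (wn n)) atTop (𝓝 (d u w)) :=
      tendsto_d hcont (Ne.symm hwu) tendsto_const_nhds hwt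
    have t2 : Tendsto (fun n => d (wn n) v) atTop (𝓝 (d w v)) :=
      tendsto_d hcont hwv hwt tendsto_const_nhds
    have t3 : Tendsto (fun n => d u (wn n) + d (wn n) v) atTop (𝓝 (d u w + d w v)) :=
      tendsto_add_ereal (htop _ _) (htop _ _) t1 t2
    have heq : ∀ n, d u (wn n) + d (wn n) v = d u v := fun n =>
      (c3 u hu (wn n) (hwn n) v hv (c1 _ (hwn n)).1 (c1 _ (hwn n)).2).symm
    have hlim : d u w + d w v = d u v :=
      tendsto_nhds_unique (t3.congr heq) tendsto_const_nhds
    constructor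
    · have hb : d u w ≠ ⊥ := by
        intro hb
        rw [hb, EReal.bot_add] at hlim
        exact hduv hlim.symm
      exact (hbot u w (Ne.symm hwu)).mp hb
    · have hb : d w v ≠ ⊥ := by
        intro hb
        rw [hb, EReal.add_bot] at hlim
        exact hduv hlim.symm
      exact (hbot w v hwv).mp hb
  -- auxiliary: no two distinct points of the closure at the same time
  have aux : ∀ p q : ℝ × ℝ, p ≠ q → p.2 = q.2 → p.2 < t →
      ∀ pn qn : ℕ → ℝ × ℝ, (∀ n, pn n ∈ A) → (∀ n, qn n ∈ A) →
      Tendsto pn atTop (𝓝 p) → Tendsto qn atTop (𝓝 q) →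
      (∀ n, (pn n).2 ≤ (qn n).2) → False := by
    intro p q hpq hpq2 hpt pn qn hpn hqn hpl hql hord
    have hpv : p ≠ v := fun h => absurd (congrArg Prod.snd h) hpt.ne
    have hqv : q ≠ v := fun h => absurd (hpq2.trans (congrArg Prod.snd h)) hpt.ne
    have t1 : Tendsto (fun n => d (pn n) (qn n)) atTop (𝓝 (d p q)) :=
      tendsto_d hcont hpq hpl hql
    have t2 : Tendsto (fun n => d (qn n) v) atTop (𝓝 (d q v)) :=
      tendsto_d hcont hqv hql tendsto_const_nhds
    have t3 := tendsto_add_ereal (htop p q) (htop q v) t1 t2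
    have t4 : Tendsto (fun n => d (pn n) v) atTop (𝓝 (d p v)) :=
      tendsto_d hcont hpv hpl tendsto_const_nhds
    have heq : ∀ n, d (pn n) (qn n) + d (qn n) v = d (pn n) v := fun n =>
      (c3 _ (hpn n) _ (hqn n) v hv (hord n) (c1 _ (hqn n)).2).symm
    have hlim : d p q + d q v = d p v := tendsto_nhds_unique (t3.congr heq) t4
    have hDpq : d p q = ⊥ := by
      by_contra hb
      exact absurd (hpq2 ▸ (hbot p q hpq).mp hb) (lt_irrefl _)
    rw [hDpq, EReal.bot_add] at hlim
    have : d p v ≠ ⊥ := (hbot p v hpv).mpr hpt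
    exact this hlim.symm
  have cinj : ∀ p ∈ closure A, ∀ q ∈ closure A, p.2 = q.2 → p = q := by
    intro p hp q hq h2
    by_contra hpq
    by_cases hpu : p = u
    · have hqu : q ≠ u := fun h => hpq (hpu.trans h.symm)
      have hqv : q ≠ v := fun h => hst.ne (by
        have : q.2 = t := congrArg Prod.snd h
        have : p.2 = t := h2.trans this
        exact ((congrArg Prod.snd hpu).symm.trans this))
      have := (cstrict q hq hqu hqv).1
      rw [← h2, hpu] at this
      exact lt_irrefl s this
    by_cases hqu : q = u
    · have hpv : p ≠ v := fun h => hst.ne (by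
        have : p.2 = t := congrArg Prod.snd h
        exact ((congrArg Prod.snd hqu).symm.trans (h2.symm.trans this)))
      have := (cstrict p hp hpu hpv).1
      rw [h2, hqu] at this
      exact lt_irrefl s this
    by_cases hpv : p = v
    · have hqv : q ≠ v := fun h => hpq (hpv.trans h.symm)
      have := (cstrict q hq hqu hqv).2
      rw [← h2, hpv] at this
      exact lt_irrefl t this
    by_cases hqv : q = v
    · have := (cstrict p hp hpu hpv).2
      rw [h2, hqv] at this
      exact lt_irrefl t this
    have hpt : p.2 < t := (cstrict p hp hpu hpv).2
    obtain ⟨pn, hpn, hpl⟩ := mem_closure_iff_seq_limit.mp hp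
    obtain ⟨qn, hqn, hql⟩ := mem_closure_iff_seq_limit.mp hq
    have hsplit : (∃ᶠ n in atTop, (pn n).2 ≤ (qn n).2) ∨
        (∃ᶠ n in atTop, (qn n).2 ≤ (pn n).2) := by
      by_contra hcon
      rw [not_or, Filter.not_frequently, Filter.not_frequently] at hcon
      obtain ⟨n, hn1, hn2⟩ := (hcon.1.and hcon.2).exists
      exact hn1 (le_of_not_ge hn2)
    rcases hsplit with hf | hf
    · obtain ⟨φ, hφ, hφo⟩ := Filter.extraction_of_frequently_atTop hf
      exact aux p q hpq h2 hpt (pn ∘ φ) (qn ∘ φ) (fun n => hpn _) (fun n => hqn _)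
        (hpl.comp hφ.tendsto_atTop) (hql.comp hφ.tendsto_atTop) hφo
    · obtain ⟨φ, hφ, hφo⟩ := Filter.extraction_of_frequently_atTop hf
      exact aux q p (Ne.symm hpq) h2.symm (h2 ▸ hpt) (qn ∘ φ) (pn ∘ φ)
        (fun n => hqn _) (fun n => hpn _)
        (hql.comp hφ.tendsto_atTop) (hpl.comp hφ.tendsto_atTop) hφo
  -- additivity on the closure
  have cadd : ∀ p ∈ closure A, ∀ q ∈ closure A, ∀ w ∈ closure A,
      p.2 < q.2 → q.2 < w.2 → d p w = d p q + d q w := by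
    intro p hp q hq w hw h1 h2
    obtain ⟨pn, hpn, hpl⟩ := mem_closure_iff_seq_limit.mp hp
    obtain ⟨qn, hqn, hql⟩ := mem_closure_iff_seq_limit.mp hq
    obtain ⟨wn, hwn, hwl⟩ := mem_closure_iff_seq_limit.mp hw
    have e1 : Tendsto (fun n => (pn n).2) atTop (𝓝 p.2) :=
      (continuous_snd.tendsto p).comp hpl
    have e2 : Tendsto (fun n => (qn n).2) atTop (𝓝 q.2) :=
      (continuous_snd.tendsto q).comp hql
    have e3 : Tendsto (fun n => (wn n).2) atTop (𝓝 w.2) :=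
      (continuous_snd.tendsto w).comp hwl
    have hev : ∀ᶠ n in atTop, (pn n).2 ≤ (qn n).2 ∧ (qn n).2 ≤ (wn n).2 :=
      ((e1.eventually_lt e2 h1).and (e2.eventually_lt e3 h2)).mono
        fun n hn => ⟨hn.1.le, hn.2.le⟩
    have hne_pq : p ≠ q := fun h => h1.ne (congrArg Prod.snd h)
    have hne_qw : q ≠ w := fun h => h2.ne (congrArg Prod.snd h)
    have hne_pw : p ≠ w := fun h => (h1.trans h2).ne (congrArg Prod.snd h)
    have t1 : Tendsto (fun n => d (pn n) (wn n)) atTop (𝓝 (d p w)) :=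
      tendsto_d hcont hne_pw hpl hwl
    have t2 : Tendsto (fun n => d (pn n) (qn n)) atTop (𝓝 (d p q)) :=
      tendsto_d hcont hne_pq hpl hql
    have t3 : Tendsto (fun n => d (qn n) (wn n)) atTop (𝓝 (d q w)) :=
      tendsto_d hcont hne_qw hql hwl
    have t4 := tendsto_add_ereal (htop p q) (htop q w) t2 t3
    have heq : ∀ᶠ n in atTop, d (pn n) (wn n) = d (pn n) (qn n) + d (qn n) (wn n) :=
      hev.mono fun n hn => c3 _ (hpn n) _ (hqn n) _ (hwn n) hn.1 hn.2
    exact tendsto_nhds_unique (t1.congr' heq) t4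
  refine ⟨subset_closure hu, subset_closure hv,
    (fun p q => p = q ∨ p.2 < q.2), ?_, ?_, ?_, ?_, ?_, ?_⟩
  · exact fun a _ => Or.inl rfl
  · rintro a ha b hb (rfl | hab) (h | hba)
    · rfl
    · rfl
    · exact h.symm
    · exact absurd (hab.trans hba) (lt_irrefl _)
  · rintro a ha b hb c hc (rfl | hab) (h | hbc)
    · exact Or.inl h
    · exact Or.inr hbc
    · exact Or.inr (h ▸ hab)
    · exact Or.inr (hab.trans hbc)
  · intro a ha b hb
    rcases lt_trichotomy a.2 b.2 with h | h | h
    · exact Or.inl (Or.inr h)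
    · exact Or.inl (Or.inl (cinj a ha b hb h))
    · exact Or.inr (Or.inr h)
  · intro z hz
    constructor
    · by_cases hzu : z = u
      · exact Or.inl hzu.symm
      · by_cases hzv : z = v
        · exact Or.inr (hzv ▸ hst)
        · exact Or.inr (cstrict z hz hzu hzv).1
    · by_cases hzv : z = v
      · exact Or.inl hzv
      · by_cases hzu : z = u
        · exact Or.inr (hzu ▸ hst)
        · exact Or.inr (cstrict z hz hzu hzv).2
  · rintro a ha b hb c hc (rfl | h1) hbc
    · rw [h0, zero_add]
    rcases hbc with rfl | h2
    · rw [h0, add_zero]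
    · exact cadd a ha b hb c hc h1 h2

lemma surj_time {d : ℝ × ℝ → ℝ × ℝ → EReal} (hd : SpacetimeMetric d)
    {x s y t : ℝ} (hst : s < t) {A : Set (ℝ × ℝ)}
    (hgeo : IsGeodesic d (x, s) (y, t) A) (hcpt : IsCompact A) :
    ∀ r ∈ Set.Icc s t, ∃ p ∈ A, p.2 = r := by
  obtain ⟨h0, hsuper, htop, hbot, hcont, hcomp, hbox⟩ := hd
  obtain ⟨hA, hmax⟩ := hgeo
  obtain ⟨c1, c2, c3⟩ := canon h0 hbot hst hA
  have hu : (x, s) ∈ A := hA.1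
  have hv : (y, t) ∈ A := hA.2.1
  set u : ℝ × ℝ := (x, s) with hu'
  set v : ℝ × ℝ := (y, t) with hv'
  intro r hr
  by_contra hno
  push_neg at hno
  have hsr : s < r := hr.1.lt_of_ne fun h => hno u hu h
  have hrt : r < t := hr.2.lt_of_ne fun h => hno v hv h.symm
  -- extremal points around the gap at time r
  have hLc : IsCompact (A ∩ {p : ℝ × ℝ | p.2 ≤ r}) :=
    hcpt.inter_right (isClosed_Iic.preimage continuous_snd)
  have hRc : IsCompact (A ∩ {p : ℝ × ℝ | r ≤ p.2}) :=
    hcpt.inter_right (isClosed_Ici.preimage continuous_snd)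
  obtain ⟨a, haL, hamax⟩ := hLc.exists_isMaxOn ⟨u, hu, hsr.le⟩
    continuous_snd.continuousOn
  obtain ⟨b, hbR, hbmin⟩ := hRc.exists_isMinOn ⟨v, hv, hrt.le⟩
    continuous_snd.continuousOn
  have ha : a ∈ A := haL.1
  have hb : b ∈ A := hbR.1
  have ha2 : a.2 < r := haL.2.lt_of_ne (hno a ha)
  have hb2 : r < b.2 := (hbR.2.lt_of_ne' fun h => hno b hb h)
  have hgap_lo : ∀ p ∈ A, p.2 < r → p.2 ≤ a.2 := fun p hp h => hamax ⟨hp, h.le⟩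
  have hgap_hi : ∀ p ∈ A, r < p.2 → b.2 ≤ p.2 := fun p hp h => hbmin ⟨hp, h.le⟩
  have hab2 : a.2 ≤ b.2 := (ha2.trans hb2).le
  obtain ⟨z, hz⟩ := (hcomp a.1 a.2 b.1 b.2 r ha2 hb2).2
  set m : ℝ × ℝ := (z, r) with hm
  have hm2 : m.2 = r := rfl
  have hz' : d a b = d a m + d m b := by simpa using hz
  -- finiteness helpers
  have fba : ∀ p q : ℝ × ℝ, p.2 < q.2 → d p q ≠ ⊥ := fun p q h =>
    (hbot p q fun e => h.ne (congrArg Prod.snd e)).mpr h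
  have fA : ∀ p ∈ A, ∀ q ∈ A, p.2 ≤ q.2 → d p q ≠ ⊥ := by
    intro p hp q hq h
    rcases eq_or_lt_of_le h with h' | h'
    · rw [c2 p hp q hq h', h0]; exact fun hc => by simp at hc
    · exact fba p q h'
  -- the key sandwich
  have key3 : ∀ p ∈ A, ∀ q ∈ A, p.2 ≤ a.2 → b.2 ≤ q.2 →
      d p q = (d p a + d a m) + (d m b + d b q) ∧ d p q = d p m + d m q := by
    intro p hp q hq hpa hbq
    have haq : a.2 ≤ q.2 := hab2.trans hbq
    have e1 : d p q = d p a + d a q := c3 p hp a ha q hq hpa haq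
    have e2 : d a q = d a b + d b q := c3 a ha b hb q hq hab2 hbq
    have eq0 : d p q = (d p a + d a m) + (d m b + d b q) := by
      rw [e1, e2, hz', add_assoc, add_assoc]
    have s1 : d p a + d a m ≤ d p m := hsuper p a m
    have s2 : d m b + d b q ≤ d m q := hsuper m b q
    have s3 : d p m + d m q ≤ d p q := hsuper p m q
    have hle : d p q ≤ d p m + d m q := by rw [eq0]; exact add_le_add s1 s2
    exact ⟨eq0, le_antisymm hle s3⟩
  have key1 : ∀ p ∈ A, p.2 ≤ a.2 → d p m = d p a + d a m := by
    intro p hp hpa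
    obtain ⟨eq0, eqm⟩ := key3 p hp v hv hpa ((c1 b hb).2)
    have hx : d p a + d a m ≠ ⊥ := by
      rw [ne_eq, EReal.add_eq_bot_iff, not_or]
      refine ⟨?_, ?_⟩
      exacts [fA p hp a ha hpa, fba a m ha2]
    have hy : d m b + d b v ≠ ⊥ := by
      rw [ne_eq, EReal.add_eq_bot_iff, not_or]
      refine ⟨?_, ?_⟩
      exacts [fba m b hb2, fA b hb v hv (c1 b hb).2]
    exact ((ereal_cancel hx hy (htop p m) (htop m v)
      (eq0.symm.trans eqm) (hsuper p a m) (hsuper m b v)).1).symm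
  have key2 : ∀ q ∈ A, b.2 ≤ q.2 → d m q = d m b + d b q := by
    intro q hq hbq
    obtain ⟨eq0, eqm⟩ := key3 u hu q hq (c1 a ha).1 hbq
    have hx : d u a + d a m ≠ ⊥ := by
      rw [ne_eq, EReal.add_eq_bot_iff, not_or]
      refine ⟨?_, ?_⟩
      exacts [fA u hu a ha (c1 a ha).1, fba a m ha2]
    have hy : d m b + d b q ≠ ⊥ := by
      rw [ne_eq, EReal.add_eq_bot_iff, not_or]
      refine ⟨?_, ?_⟩
      exacts [fba m b hb2, fA b hb q hq hbq]
    exact ((ereal_cancel hx hy (htop u m) (htop m q)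
      (eq0.symm.trans eqm) (hsuper u a m) (hsuper m b q)).2).symm
  -- the extended set
  have hmA : m ∉ A := fun h => hno m h hm2
  have hBgeo : IsGeodesicSet d u v (insert m A) := by
    refine ⟨Set.mem_insert_iff.mpr (Or.inr hu), Set.mem_insert_iff.mpr (Or.inr hv),
      (fun p q => p = q ∨ p.2 < q.2), ?_, ?_, ?_, ?_, ?_, ?_⟩
    · exact fun p _ => Or.inl rfl
    · rintro p hp q hq (rfl | h1) (h | h2)
      · rfl
      · rfl
      · exact h.symm
      · exact absurd (h1.trans h2) (lt_irrefl _)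
    · rintro p hp q hq w hw (rfl | h1) (h | h2)
      · exact Or.inl h
      · exact Or.inr h2
      · exact Or.inr (h ▸ h1)
      · exact Or.inr (h1.trans h2)
    · intro p hp q hq
      rcases lt_trichotomy p.2 q.2 with h | h | h
      · exact Or.inl (Or.inr h)
      · rcases hp with rfl | hp
        · rcases hq with rfl | hq
          · exact Or.inl (Or.inl rfl)
          · exact absurd (hno q hq) (by rw [← h, hm2]; simp)
        · rcases hq with rfl | hq
          · exact absurd (hno p hp) (by rw [h, hm2]; simp)
          · exact Or.inl (Or.inl (c2 p hp q hq h))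
      · exact Or.inr (Or.inr h)
    · rintro p (rfl | hp)
      · exact ⟨Or.inr hsr, Or.inr hrt⟩
      constructor
      · rcases eq_or_lt_of_le (c1 p hp).1 with h | h
        · exact Or.inl (c2 u hu p hp h)
        · exact Or.inr h
      · rcases eq_or_lt_of_le (c1 p hp).2 with h | h
        · exact Or.inl (c2 p hp v hv h)
        · exact Or.inr h
    · rintro p hp q hq w hw (rfl | h1) hqw
      · rw [h0, zero_add]
      rcases hqw with rfl | h2
      · rw [h0, add_zero]
      rcases hp with rfl | hp
      · -- p = m
        rcases hq with rfl | hq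
        · exact absurd h1 (lt_irrefl _)
        rcases hw with rfl | hw
        · exact absurd (h1.trans h2) (lt_irrefl _)
        · -- pattern (m, q, w) with q, w ∈ A
          have hbq : b.2 ≤ q.2 := hgap_hi q hq h1
          have hbw : b.2 ≤ w.2 := hgap_hi w hw (h1.trans h2)
          calc d m w = d m b + d b w := key2 w hw hbw
            _ = d m b + (d b q + d q w) := by rw [c3 b hb q hq w hw hbq h2.le]
            _ = (d m b + d b q) + d q w := (add_assoc _ _ _).symm
            _ = d m q + d q w := by rw [← key2 q hq hbq]
      rcases hq with rfl | hq
      · -- q = m, p ∈ A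
        rcases hw with rfl | hw
        · exact absurd h2 (lt_irrefl _)
        · exact (key3 p hp w hw (hgap_lo p hp h1) (hgap_hi w hw h2)).2
      rcases hw with rfl | hw
      · -- w = m, p q ∈ A
        have hpa : p.2 ≤ a.2 := hgap_lo p hp (h1.trans h2)
        have hqa : q.2 ≤ a.2 := hgap_lo q hq h2
        calc d p m = d p a + d a m := key1 p hp hpa
          _ = (d p q + d q a) + d a m := by rw [← c3 p hp q hq a ha h1.le hqa]
          _ = d p q + (d q a + d a m) := add_assoc _ _ _
          _ = d p q + d q m := by rw [← key1 q hq hqa]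
      · exact c3 p hp q hq w hw h1.le h2.le
  have hBeq := hmax (insert m A) hBgeo (Set.subset_insert m A)
  exact hmA (hBeq ▸ Set.mem_insert m A)

end SpacetimeAux


/-- In a spacetime metric, a geodesic set `A` from `u = (x,s)` to `v = (y,t)`
(with `s < t`) is a geodesic (i.e. a maximal geodesic set) if and only if `A`
is a connected subset of `ℝ²`. -/


theorem spacetime_geodesic_iff_connected (d : ℝ × ℝ → ℝ × ℝ → EReal)
    (hd : SpacetimeMetric d) (x s y t : ℝ) (hst : s < t)
    (A : Set (ℝ × ℝ)) (hA : IsGeodesicSet d (x, s) (y, t) A) :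
    IsGeodesic d (x, s) (y, t) A ↔ IsConnected A := by
  obtain ⟨c1, c2, c3⟩ := canon hd.1 hd.2.2.2.1 hst hA
  constructor
  · intro hgeo
    obtain ⟨a0, b0, hbox'⟩ := hd.2.2.2.2.2.2 x s y t hst
    have hsub := hbox' A hgeo
    have hclosed : IsClosed A :=
      closure_eq_iff_isClosed.mp
        (hgeo.2 (closure A) (closure_isGeodesicSet hd hst hA) subset_closure)
    have hcpt : IsCompact A :=
      (isCompact_Icc.prod isCompact_Icc).of_isClosed_subset hclosed hsub
    have hsurj := surj_time hd hst hgeo hcpt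
    haveI : CompactSpace A := isCompact_iff_compactSpace.mp hcpt
    haveI : ConnectedSpace (Set.Icc s t) :=
      Subtype.connectedSpace ⟨Set.nonempty_Icc.mpr hst.le, isPreconnected_Icc⟩
    have hfb : Function.Bijective
        (fun p : A => (⟨(p : ℝ × ℝ).2, (c1 _ p.2).1, (c1 _ p.2).2⟩ : Set.Icc s t)) := by
      constructor
      · intro p q h
        exact Subtype.ext (c2 _ p.2 _ q.2 (congrArg Subtype.val h))
      · rintro ⟨r, hr⟩
        obtain ⟨p, hp, hpr⟩ := hsurj r hr
        exact ⟨⟨p, hp⟩, Subtype.ext hpr⟩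
    let e : A ≃ Set.Icc s t := Equiv.ofBijective _ hfb
    have hec : Continuous e :=
      Continuous.subtype_mk (continuous_snd.comp continuous_subtype_val) _
    let h : A ≃ₜ Set.Icc s t := hec.homeoOfEquivCompactToT2
    have hcrange : IsConnected (Set.range (Subtype.val ∘ h.symm)) :=
      isConnected_range (continuous_subtype_val.comp h.symm.continuous)
    have hrange : Set.range (Subtype.val ∘ h.symm) = A := by
      rw [Set.range_comp, h.symm.surjective.range_eq, Set.image_univ,
        Subtype.range_coe]
    rwa [hrange] at hcrange
  · intro hconn
    refine ⟨hA, fun B hB hsubAB => ?_⟩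
    obtain ⟨c1', c2', c3'⟩ := canon hd.1 hd.2.2.2.1 hst hB
    have himg : IsPreconnected (Prod.snd '' A) :=
      (hconn.image _ continuous_snd.continuousOn).isPreconnected
    have hic : Set.Icc s t ⊆ Prod.snd '' A :=
      himg.Icc_subset ⟨(x, s), hA.1, rfl⟩ ⟨(y, t), hA.2.1, rfl⟩
    refine Set.Subset.antisymm (fun p hp => ?_) hsubAB
    obtain ⟨q, hq, hq2⟩ := hic ⟨(c1' p hp).1, (c1' p hp).2⟩
    exact (c2' q (hsubAB hq) p hp hq2) ▸ hq
end
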